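/- arXiv:0904.0791 — 5 statements merged into one kernel-verified Lean document; each statement's English description precedes it below -/
import Mathlib

section
/- Let β > 0 and 0 < ρ⁻ < ρ⁺ satisfy log ρ⁺ + β ρ⁻ = log ρ⁻ + β ρ⁺ (equivalently β = (log ρ⁺ − log ρ⁻)/(ρ⁺ − ρ⁻)). Let U : ℝ → ℝ be measurable, nonnegative, with U(r) = 0 for r ≥ 1 and ∫_ℝ U(|x|) dx = 1. Then there exists δ₀ > 0 such that for all u₁, u₂ ∈ L²(ℝ), (1/2)∫_ℝ (u₁(x)²/ρ⁺ + u₂(x)²/ρ⁻) dx + β ∫_ℝ∫_ℝ U(|x−y|) u₁(x) u₂(y) dx dy ≥ δ₀ (‖u₁‖²_{L²} + ‖u₂‖²_{L²}). -/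
open MeasureTheory

private lemma amgm_pt (t a b c : ℝ) (ht : 0 < t) (hc : 0 ≤ c) :
    |c * a * b| ≤ t/2 * (c * a^2) + 1/(2*t) * (c * b^2) := by
  rw [abs_mul, abs_mul, abs_of_nonneg hc, ← sq_abs a, ← sq_abs b]
  have h2t : (0:ℝ) < 2*t := by linarith
  have key : 2*t*(t/2 * (c * |a|^2) + 1/(2*t) * (c * |b|^2))
      = t^2*(c*|a|^2) + c*|b|^2 := by
    field_simp
  refine le_of_mul_le_mul_left ?_ h2t
  rw [key]
  nlinarith [mul_nonneg hc (sq_nonneg (t*|a| - |b|)), abs_nonneg a, abs_nonneg b]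

private lemma U_int {U : ℝ → ℝ} (hUint : (∫ x : ℝ, U |x|) = 1) :
    Integrable (fun x : ℝ => U |x|) := by
  by_contra h
  rw [integral_undef h] at hUint
  norm_num at hUint

private lemma U_lint {U : ℝ → ℝ} (hUnonneg : ∀ r, 0 ≤ U r)
    (hUint : (∫ x : ℝ, U |x|) = 1) :
    ∫⁻ x : ℝ, ENNReal.ofReal (U |x|) = 1 := by
  rw [← ofReal_integral_eq_lintegral_ofReal (U_int hUint)
    (Filter.Eventually.of_forall fun x => hUnonneg _), hUint, ENNReal.ofReal_one]

private lemma U_lint_left {U : ℝ → ℝ} (hUmeas : Measurable U)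
    (hUnonneg : ∀ r, 0 ≤ U r) (hUint : (∫ x : ℝ, U |x|) = 1) (x : ℝ) :
    ∫⁻ y : ℝ, ENNReal.ofReal (U |x - y|) = 1 := by
  have hm : Measurable (fun z : ℝ => ENNReal.ofReal (U |z|)) :=
    (hUmeas.comp measurable_abs).ennreal_ofReal
  have hmp : MeasurePreserving (fun t : ℝ => x - t) volume volume := by
    have h : (fun t : ℝ => x - t) = (fun t : ℝ => x + t) ∘ (fun t : ℝ => -t) := by
      funext t; simp [sub_eq_add_neg]
    rw [h]
    exact (measurePreserving_add_left volume x).comp (Measure.measurePreserving_neg volume)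
  have := hmp.lintegral_comp hm
  simpa using this.trans (U_lint hUnonneg hUint)

private lemma U_lint_right {U : ℝ → ℝ} (hUmeas : Measurable U)
    (hUnonneg : ∀ r, 0 ≤ U r) (hUint : (∫ x : ℝ, U |x|) = 1) (y : ℝ) :
    ∫⁻ x : ℝ, ENNReal.ofReal (U |x - y|) = 1 := by
  have hm : Measurable (fun z : ℝ => ENNReal.ofReal (U |z|)) :=
    (hUmeas.comp measurable_abs).ennreal_ofReal
  have := (measurePreserving_sub_right (volume : Measure ℝ) y).lintegral_comp hm
  simpa using this.trans (U_lint hUnonneg hUint)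

private lemma prod_left {U : ℝ → ℝ} (hUmeas : Measurable U)
    (hUnonneg : ∀ r, 0 ≤ U r) (hUint : (∫ x : ℝ, U |x|) = 1)
    {f : ℝ → ℝ} (hf : Measurable f) (hfi : Integrable (fun x => f x ^ 2)) :
    ∫⁻ p : ℝ × ℝ, ENNReal.ofReal (U |p.1 - p.2| * f p.1 ^ 2)
      ∂((volume : Measure ℝ).prod volume) = ENNReal.ofReal (∫ x, f x ^ 2) := by
  have hK : Measurable (fun p : ℝ × ℝ => U |p.1 - p.2| * f p.1 ^ 2) :=
    (hUmeas.comp ((measurable_fst.sub measurable_snd).abs)).mul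
      ((hf.comp measurable_fst).pow_const 2)
  rw [lintegral_prod _ hK.ennreal_ofReal.aemeasurable]
  have h1 : ∀ x : ℝ, (∫⁻ y, ENNReal.ofReal (U |x - y| * f x ^ 2))
      = ENNReal.ofReal (f x ^ 2) := by
    intro x
    simp_rw [ENNReal.ofReal_mul (hUnonneg _)]
    have hmx : Measurable (fun y : ℝ => ENNReal.ofReal (U |x - y|)) :=
      (hUmeas.comp ((measurable_const.sub measurable_id).abs)).ennreal_ofReal
    rw [lintegral_mul_const _ hmx, U_lint_left hUmeas hUnonneg hUint x, one_mul]
  simp_rw [h1]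
  rw [← ofReal_integral_eq_lintegral_ofReal hfi
    (Filter.Eventually.of_forall fun x => sq_nonneg _)]

private lemma prod_right {U : ℝ → ℝ} (hUmeas : Measurable U)
    (hUnonneg : ∀ r, 0 ≤ U r) (hUint : (∫ x : ℝ, U |x|) = 1)
    {f : ℝ → ℝ} (hf : Measurable f) (hfi : Integrable (fun x => f x ^ 2)) :
    ∫⁻ p : ℝ × ℝ, ENNReal.ofReal (U |p.1 - p.2| * f p.2 ^ 2)
      ∂((volume : Measure ℝ).prod volume) = ENNReal.ofReal (∫ x, f x ^ 2) := by
  have hK : Measurable (fun p : ℝ × ℝ => U |p.1 - p.2| * f p.2 ^ 2) :=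
    (hUmeas.comp ((measurable_fst.sub measurable_snd).abs)).mul
      ((hf.comp measurable_snd).pow_const 2)
  rw [lintegral_prod_symm _ hK.ennreal_ofReal.aemeasurable]
  have h1 : ∀ y : ℝ, (∫⁻ x, ENNReal.ofReal (U |x - y| * f y ^ 2))
      = ENNReal.ofReal (f y ^ 2) := by
    intro y
    simp_rw [ENNReal.ofReal_mul (hUnonneg _)]
    have hmy : Measurable (fun x : ℝ => ENNReal.ofReal (U |x - y|)) :=
      (hUmeas.comp ((measurable_id.sub measurable_const).abs)).ennreal_ofReal
    rw [lintegral_mul_const _ hmy, U_lint_right hUmeas hUnonneg hUint y, one_mul]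
  simp_rw [h1]
  rw [← ofReal_integral_eq_lintegral_ofReal hfi
    (Filter.Eventually.of_forall fun x => sq_nonneg _)]

private lemma cross_bound {U : ℝ → ℝ} (hUmeas : Measurable U)
    (hUnonneg : ∀ r, 0 ≤ U r) (hUint : (∫ x : ℝ, U |x|) = 1)
    {t : ℝ} (ht : 0 < t) {v₁ v₂ : ℝ → ℝ}
    (hm₁ : Measurable v₁) (hm₂ : Measurable v₂)
    (h₁ : MemLp v₁ 2 (volume : Measure ℝ)) (h₂ : MemLp v₂ 2 (volume : Measure ℝ)) :
    -(t/2 * (∫ x, v₁ x ^ 2) + 1/(2*t) * (∫ x, v₂ x ^ 2)) ≤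
      ∫ x : ℝ, ∫ y : ℝ, U |x - y| * v₁ x * v₂ y := by
  set μ2 : Measure (ℝ × ℝ) := (volume : Measure ℝ).prod volume with hμ2
  set M₁ : ℝ × ℝ → ℝ := fun p => U |p.1 - p.2| * v₁ p.1 ^ 2 with hM₁
  set M₂ : ℝ × ℝ → ℝ := fun p => U |p.1 - p.2| * v₂ p.2 ^ 2 with hM₂
  set M : ℝ × ℝ → ℝ := fun p => t/2 * M₁ p + 1/(2*t) * M₂ p with hM
  set H : ℝ × ℝ → ℝ := fun p => U |p.1 - p.2| * v₁ p.1 * v₂ p.2 with hH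
  have hKmeas : Measurable (fun p : ℝ × ℝ => U |p.1 - p.2|) :=
    hUmeas.comp ((measurable_fst.sub measurable_snd).abs)
  have hK₁ : Measurable M₁ := hKmeas.mul ((hm₁.comp measurable_fst).pow_const 2)
  have hK₂ : Measurable M₂ := hKmeas.mul ((hm₂.comp measurable_snd).pow_const 2)
  have hKH : Measurable H :=
    (hKmeas.mul (hm₁.comp measurable_fst)).mul (hm₂.comp measurable_snd)
  have hint₁ : Integrable M₁ μ2 := by
    refine ⟨hK₁.aestronglyMeasurable, ?_⟩
    rw [hasFiniteIntegral_iff_ofReal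
      (Filter.Eventually.of_forall fun p => mul_nonneg (hUnonneg _) (sq_nonneg _))]
    rw [prod_left hUmeas hUnonneg hUint hm₁ h₁.integrable_sq]
    exact ENNReal.ofReal_lt_top
  have hint₂ : Integrable M₂ μ2 := by
    refine ⟨hK₂.aestronglyMeasurable, ?_⟩
    rw [hasFiniteIntegral_iff_ofReal
      (Filter.Eventually.of_forall fun p => mul_nonneg (hUnonneg _) (sq_nonneg _))]
    rw [prod_right hUmeas hUnonneg hUint hm₂ h₂.integrable_sq]
    exact ENNReal.ofReal_lt_top
  have hval₁ : ∫ p, M₁ p ∂μ2 = ∫ x, v₁ x ^ 2 := by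
    rw [integral_eq_lintegral_of_nonneg_ae
      (Filter.Eventually.of_forall fun p => mul_nonneg (hUnonneg _) (sq_nonneg _))
      hK₁.aestronglyMeasurable]
    rw [prod_left hUmeas hUnonneg hUint hm₁ h₁.integrable_sq,
      ENNReal.toReal_ofReal (integral_nonneg fun x => sq_nonneg _)]
  have hval₂ : ∫ p, M₂ p ∂μ2 = ∫ x, v₂ x ^ 2 := by
    rw [integral_eq_lintegral_of_nonneg_ae
      (Filter.Eventually.of_forall fun p => mul_nonneg (hUnonneg _) (sq_nonneg _))
      hK₂.aestronglyMeasurable]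
    rw [prod_right hUmeas hUnonneg hUint hm₂ h₂.integrable_sq,
      ENNReal.toReal_ofReal (integral_nonneg fun x => sq_nonneg _)]
  have hMint : Integrable M μ2 := (hint₁.const_mul _).add (hint₂.const_mul _)
  have hMeq : ∫ p, M p ∂μ2 = t/2 * (∫ x, v₁ x ^ 2) + 1/(2*t) * (∫ x, v₂ x ^ 2) := by
    rw [hM]
    rw [integral_add (hint₁.const_mul _) (hint₂.const_mul _),
      integral_const_mul, integral_const_mul, hval₁, hval₂]
  have hHb : ∀ p, |H p| ≤ M p := fun p =>
    amgm_pt t (v₁ p.1) (v₂ p.2) (U |p.1 - p.2|) ht (hUnonneg _)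
  have hMnn : ∀ p, 0 ≤ M p := fun p => (abs_nonneg _).trans (hHb p)
  have hHint : Integrable H μ2 := by
    refine hMint.mono hKH.aestronglyMeasurable ?_
    refine Filter.Eventually.of_forall fun p => ?_
    rw [Real.norm_eq_abs, Real.norm_eq_abs, abs_of_nonneg (hMnn p)]
    exact hHb p
  have hiter : (∫ x : ℝ, ∫ y : ℝ, U |x - y| * v₁ x * v₂ y) = ∫ p, H p ∂μ2 :=
    (integral_integral (f := fun x y => U |x - y| * v₁ x * v₂ y) hHint)
  rw [hiter]
  calc -(t/2 * (∫ x, v₁ x ^ 2) + 1/(2*t) * (∫ x, v₂ x ^ 2))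
      = ∫ p, -(M p) ∂μ2 := by rw [integral_neg, hMeq]
    _ ≤ ∫ p, H p ∂μ2 := integral_mono hMint.neg hHint fun p => (abs_le.mp (hHb p)).1

private lemma key_ineq (β ρm ρp : ℝ) (h0m : 0 < ρm) (hmp : ρm < ρp)
    (hchem : Real.log ρp + β * ρm = Real.log ρm + β * ρp) :
    β * Real.sqrt (ρm * ρp) < 1 := by
  have h0p : 0 < ρp := h0m.trans hmp
  set g := Real.sqrt (ρm * ρp) with hg
  have hg0 : 0 < g := Real.sqrt_pos.mpr (by positivity)
  have hg2 : g ^ 2 = ρm * ρp := Real.sq_sqrt (by positivity)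
  have hx1 : 1 < ρp / g := by
    rw [lt_div_iff₀ hg0]
    nlinarith [sq_nonneg (ρp - g)]
  have hx0 : 0 < ρp / g := by positivity
  have hsinh := Real.self_lt_sinh_iff.mpr (Real.log_pos hx1)
  rw [Real.sinh_log hx0] at hsinh
  have hloggd : Real.log (ρp / g) = (Real.log ρp - Real.log ρm) / 2 := by
    rw [Real.log_div (by positivity) (ne_of_gt hg0), hg, Real.log_sqrt (by positivity),
      Real.log_mul (ne_of_gt h0m) (ne_of_gt h0p)]
    ring
  have hinv : (ρp / g)⁻¹ = ρm / g := by
    rw [inv_div]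
    rw [div_eq_div_iff (ne_of_gt h0p) (ne_of_gt hg0)]
    nlinarith
  rw [hloggd, hinv] at hsinh
  have hβeq : Real.log ρp - Real.log ρm = β * (ρp - ρm) := by linarith
  rw [hβeq] at hsinh
  have h1 : β * (ρp - ρm) * g < ρp - ρm := by
    rw [div_sub_div_same, div_lt_div_iff₀ (by norm_num) (by norm_num)] at hsinh
    nlinarith [(lt_div_iff₀ hg0).mp (by linarith : β * (ρp - ρm) < (ρp - ρm) / g)]
  nlinarith

/-- Spectral gap for the linearized free-energy operator at a constant pure
phase `ρ = (ρ⁺, ρ⁻)`. -/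
theorem spectral_gap_pure_phase (β ρm ρp : ℝ) (hβ : 0 < β)
    (h0m : 0 < ρm) (hmp : ρm < ρp)
    (hchem : Real.log ρp + β * ρm = Real.log ρm + β * ρp)
    (U : ℝ → ℝ) (hUmeas : Measurable U) (hUnonneg : ∀ r, 0 ≤ U r)
    (hUsupp : ∀ r, 1 ≤ r → U r = 0)
    (hUint : (∫ x : ℝ, U |x|) = 1) :
    ∃ δ₀ > (0:ℝ), ∀ u₁ u₂ : ℝ → ℝ,
      MemLp u₁ 2 (volume : Measure ℝ) → MemLp u₂ 2 (volume : Measure ℝ) →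
      δ₀ * ((∫ x : ℝ, (u₁ x)^2) + ∫ x : ℝ, (u₂ x)^2) ≤
        (1/2) * (∫ x : ℝ, ((u₁ x)^2 / ρp + (u₂ x)^2 / ρm)) +
          β * ∫ x : ℝ, ∫ y : ℝ, U |x - y| * u₁ x * u₂ y := by
  have h0p : 0 < ρp := h0m.trans hmp
  have hβg : β * Real.sqrt (ρm * ρp) < 1 := key_ineq β ρm ρp h0m hmp hchem
  set g := Real.sqrt (ρm * ρp) with hgdef
  have hg0 : 0 < g := Real.sqrt_pos.mpr (by positivity)
  have hg2 : g ^ 2 = ρm * ρp := Real.sq_sqrt (by positivity)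
  refine ⟨(1 - β * g) / (2 * ρp), div_pos (by linarith) (by linarith), ?_⟩
  intro u₁ u₂ h₁ h₂
  set v₁ : ℝ → ℝ := h₁.1.mk u₁ with hv₁def
  set v₂ : ℝ → ℝ := h₂.1.mk u₂ with hv₂def
  have hv₁e : u₁ =ᵐ[volume] v₁ := h₁.1.ae_eq_mk
  have hv₂e : u₂ =ᵐ[volume] v₂ := h₂.1.ae_eq_mk
  have hm₁ : Measurable v₁ := h₁.1.stronglyMeasurable_mk.measurable
  have hm₂ : Measurable v₂ := h₂.1.stronglyMeasurable_mk.measurable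
  have hL₁ : MemLp v₁ 2 (volume : Measure ℝ) := h₁.ae_eq hv₁e
  have hL₂ : MemLp v₂ 2 (volume : Measure ℝ) := h₂.ae_eq hv₂e
  have hAe : (∫ x : ℝ, (u₁ x)^2) = ∫ x : ℝ, (v₁ x)^2 :=
    integral_congr_ae (hv₁e.mono fun x h => by simp only [h])
  have hBe : (∫ x : ℝ, (u₂ x)^2) = ∫ x : ℝ, (v₂ x)^2 :=
    integral_congr_ae (hv₂e.mono fun x h => by simp only [h])
  have hsum : (∫ x : ℝ, ((u₁ x)^2 / ρp + (u₂ x)^2 / ρm))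
      = ∫ x : ℝ, ((v₁ x)^2 / ρp + (v₂ x)^2 / ρm) := by
    apply integral_congr_ae
    filter_upwards [hv₁e, hv₂e] with x hx1 hx2
    simp only [hx1, hx2]
  have hcross : (∫ x : ℝ, ∫ y : ℝ, U |x - y| * u₁ x * u₂ y)
      = ∫ x : ℝ, ∫ y : ℝ, U |x - y| * v₁ x * v₂ y := by
    apply integral_congr_ae
    filter_upwards [hv₁e] with x hx
    simp only [hx]
    exact integral_congr_ae (hv₂e.mono fun y hy => by simp only [hy])
  rw [hAe, hBe, hsum, hcross]
  set A := ∫ x : ℝ, (v₁ x)^2 with hAdef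
  set B := ∫ x : ℝ, (v₂ x)^2 with hBdef
  have hAnn : 0 ≤ A := integral_nonneg fun x => sq_nonneg _
  have hBnn : 0 ≤ B := integral_nonneg fun x => sq_nonneg _
  have hsum' : (∫ x : ℝ, ((v₁ x)^2 / ρp + (v₂ x)^2 / ρm)) = A / ρp + B / ρm := by
    rw [integral_add (hL₁.integrable_sq.div_const ρp) (hL₂.integrable_sq.div_const ρm),
      integral_div, integral_div]
  set t := g / ρp with htdef
  have ht : 0 < t := by positivity
  have hcb := cross_bound hUmeas hUnonneg hUint ht hm₁ hm₂ hL₁ hL₂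
  rw [hsum']
  have hmul : β * (-(t/2 * A + 1/(2*t) * B)) ≤
      β * ∫ x : ℝ, ∫ y : ℝ, U |x - y| * v₁ x * v₂ y :=
    mul_le_mul_of_nonneg_left hcb hβ.le
  have e1 : 1/2 * (A/ρp) - β * (t/2 * A) = (1 - β*g)/(2*ρp) * A := by
    rw [htdef]; field_simp
  have h1t : 1/(2*t) = g/(2*ρm) := by
    rw [htdef]
    field_simp
    linear_combination (-1) * hg2
  have e2 : 1/2 * (B/ρm) - β * (1/(2*t) * B) = (1 - β*g)/(2*ρm) * B := by
    rw [h1t]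
    field_simp
  have hδc : (1 - β*g)/(2*ρp) ≤ (1 - β*g)/(2*ρm) :=
    div_le_div_of_nonneg_left (by linarith) (by linarith) (by linarith)
  have key : (1 - β*g)/(2*ρp) * (A + B) ≤
      1/2 * (A/ρp + B/ρm) - β * (t/2 * A + 1/(2*t) * B) := by
    have h1 : 1/2 * (A/ρp + B/ρm) - β * (t/2 * A + 1/(2*t) * B)
        = (1 - β*g)/(2*ρp) * A + (1 - β*g)/(2*ρm) * B := by
      linear_combination e1 + e2
    rw [h1]
    nlinarith [mul_le_mul_of_nonneg_right hδc hBnn]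
  linarith
end

section
/- Fix Σ ≥ 1 and γ > 3/2, and set w(ξ) = (Σ + |ξ|²)^γ for ξ ∈ ℝ³. There exist ε ∈ (0,1) and C > 0, depending only on γ (in particular independent of Σ ≥ 1), such that for all ξ ∈ ℝ³: ∫_{ℝ³} (w(ξ)/w(ξ′)) (|ξ − ξ′| + |ξ − ξ′|⁻¹) exp( −((1−ε)/8)|ξ − ξ′|² − ((1−ε)/8) (|ξ|² − |ξ′|²)² / |ξ − ξ′|² ) dξ′ ≤ C / (1 + |ξ|). -/
open MeasureTheory Real

noncomputable def Λf (u : ℝ) : ℝ := rexp (-(1/64) * u^2)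
noncomputable def σf (u : ℝ) : ℝ := (√|u|)⁻¹ * rexp (-(1/64) * u^2)
noncomputable def τf (u : ℝ) : ℝ := √|u| * rexp (-(1/64) * u^2)
lemma Λf_integrable : Integrable Λf := integrable_exp_neg_mul_sq (by norm_num)

lemma rpow_half_neg {x : ℝ} (hx : x < 0) : x ^ ((1:ℝ)/2) = 0 := by
  rw [Real.rpow_def_of_neg hx, show (1:ℝ)/2 * π = π/2 by ring, Real.cos_pi_div_two, mul_zero]
lemma rpow_neg_half_neg {x : ℝ} (hx : x < 0) : x ^ (-(1:ℝ)/2) = 0 := by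
  rw [Real.rpow_def_of_neg hx, show (-(1:ℝ))/2 * π = -(π/2) by ring, Real.cos_neg,
    Real.cos_pi_div_two, mul_zero]
lemma rpow_half_nonneg {x : ℝ} (hx : 0 ≤ x) : x ^ ((1:ℝ)/2) = √x := by
  rw [Real.sqrt_eq_rpow]
lemma rpow_neg_half_nonneg {x : ℝ} (hx : 0 ≤ x) : x ^ (-(1:ℝ)/2) = (√x)⁻¹ := by
  rw [show (-(1:ℝ))/2 = -(1/2) by ring, Real.rpow_neg hx, Real.sqrt_eq_rpow]

lemma σf_integrable : Integrable σf := by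
  have h : Integrable (fun x : ℝ => x ^ (-(1:ℝ)/2) * rexp (-(1/64) * x^2)) :=
    integrable_rpow_mul_exp_neg_mul_sq (by norm_num) (by norm_num)
  have h2 := h.add h.comp_neg
  apply h2.congr
  apply Filter.Eventually.of_forall
  intro u
  simp only [Pi.add_apply, neg_sq]
  rcases lt_trichotomy u 0 with hu | hu | hu
  · rw [rpow_neg_half_neg hu, rpow_neg_half_nonneg (by linarith : (0:ℝ) ≤ -u)]
    rw [show √(-u) = √|u| by rw [abs_of_neg hu]]
    simp [σf]
  · simp [σf, hu, Real.zero_rpow (by norm_num : (-(1:ℝ)/2) ≠ 0)]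
  · rw [rpow_neg_half_nonneg (le_of_lt hu), rpow_neg_half_neg (by linarith : -u < 0)]
    rw [show √u = √|u| by rw [abs_of_pos hu]]
    simp [σf]

lemma τf_integrable : Integrable τf := by
  have h : Integrable (fun x : ℝ => x ^ ((1:ℝ)/2) * rexp (-(1/64) * x^2)) :=
    integrable_rpow_mul_exp_neg_mul_sq (by norm_num) (by norm_num)
  have h2 := h.add h.comp_neg
  apply h2.congr
  apply Filter.Eventually.of_forall
  intro u
  simp only [Pi.add_apply, neg_sq]
  rcases lt_trichotomy u 0 with hu | hu | hu
  · rw [rpow_half_neg hu, rpow_half_nonneg (by linarith : (0:ℝ) ≤ -u)]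
    rw [show √(-u) = √|u| by rw [abs_of_neg hu]]
    simp [τf]
  · simp [τf, hu, Real.zero_rpow (by norm_num : ((1:ℝ)/2) ≠ 0)]
  · rw [rpow_half_nonneg (le_of_lt hu), rpow_half_neg (by linarith : -u < 0)]
    rw [show √u = √|u| by rw [abs_of_pos hu]]
    simp [τf]


lemma Λf_nonneg (u : ℝ) : 0 ≤ Λf u := le_of_lt (Real.exp_pos _)
lemma σf_nonneg (u : ℝ) : 0 ≤ σf u := by unfold σf; positivity
lemma τf_nonneg (u : ℝ) : 0 ≤ τf u := by unfold τf; positivity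

lemma Λf_measurable : Measurable Λf := by unfold Λf; fun_prop
lemma σf_measurable : Measurable σf := by unfold σf; fun_prop
lemma τf_measurable : Measurable τf := by unfold τf; fun_prop

noncomputable def Pf (p : ℝ × ℝ × ℝ) : ℝ := Λf p.1 * (σf p.2.1 * σf p.2.2)

lemma Pf_nonneg (p) : 0 ≤ Pf p := by unfold Pf Λf σf; positivity

lemma Pf_integrable : Integrable Pf :=
  Λf_integrable.mul_prod (σf_integrable.mul_prod σf_integrable)

lemma vol_prod3 : (volume : Measure (ℝ × ℝ × ℝ)) = ((volume : Measure ℝ).prod ((volume : Measure ℝ).prod (volume : Measure ℝ))) := rfl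
lemma vol_prod2 : (volume : Measure (ℝ × ℝ)) = ((volume : Measure ℝ).prod (volume : Measure ℝ)) := rfl

lemma Pf_integral : ∫ p : ℝ × ℝ × ℝ, Pf p = (∫ u, Λf u) * ((∫ u, σf u) * (∫ u, σf u)) := by
  unfold Pf
  rw [vol_prod3, integral_prod_mul Λf (fun q : ℝ × ℝ => σf q.1 * σf q.2),
    integral_prod_mul σf σf]

noncomputable def TB1 (m : ℝ) (p : ℝ × ℝ × ℝ) : ℝ :=
  Pf p * rexp (-(1/128)*m^2*p.1^2/p.2.1^2)

lemma TB1_nonneg (m p) : 0 ≤ TB1 m p := by unfold TB1 Pf Λf σf; positivity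
lemma TB1_le_Pf (m p) : TB1 m p ≤ Pf p := by
  have h1 : rexp (-(1/128)*m^2*p.1^2/p.2.1^2) ≤ 1 := by
    rw [Real.exp_le_one_iff]
    have : (0:ℝ) ≤ (1/128)*m^2*p.1^2/p.2.1^2 := by positivity
    have h0 : -(1/128)*m^2*p.1^2/p.2.1^2 = -((1/128)*m^2*p.1^2/p.2.1^2) := by ring
    linarith
  have h2 : 0 ≤ Pf p := Pf_nonneg p
  unfold TB1
  nlinarith

lemma TB1_measurable (m : ℝ) : Measurable (TB1 m) := by
  unfold TB1 Pf Λf σf; fun_prop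

lemma TB1_integrable (m : ℝ) : Integrable (TB1 m) := by
  apply Pf_integrable.mono' (TB1_measurable m).aestronglyMeasurable
  apply Filter.Eventually.of_forall
  intro p
  rw [Real.norm_eq_abs, abs_of_nonneg (TB1_nonneg m p)]
  exact TB1_le_Pf m p

lemma ae_fst_ne_zero : ∀ᵐ q : ℝ × ℝ, q.1 ≠ (0:ℝ) := by
  rw [ae_iff]
  have h : {q : ℝ × ℝ | ¬ q.1 ≠ 0} = ({0} : Set ℝ) ×ˢ (Set.univ : Set ℝ) := by
    ext ⟨a, b⟩; simp [eq_comm]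
  rw [h, vol_prod2, Measure.prod_prod]
  simp

lemma TB1_inner (m : ℝ) (q : ℝ × ℝ) :
    ∫ x : ℝ, TB1 m (x, q) = σf q.1 * σf q.2 * √(π / ((1/64) + (1/128)*m^2/q.1^2)) := by
  have h1 : (fun x : ℝ => TB1 m (x, q))
      = fun x => (σf q.1 * σf q.2) * rexp (-((1/64) + (1/128)*m^2/q.1^2) * x^2) := by
    funext x
    show Λf x * (σf q.1 * σf q.2) * rexp (-(1/128)*m^2*x^2/q.1^2) = _
    unfold Λf
    rw [mul_comm (rexp (-(1/64) * x^2)) (σf q.1 * σf q.2), mul_assoc, ← Real.exp_add]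
    congr 2
    ring
  rw [h1, MeasureTheory.integral_const_mul, integral_gaussian]

lemma abs_mul_σf (y : ℝ) : |y| * σf y = τf y := by
  unfold σf τf
  rcases eq_or_ne y 0 with h | h
  · simp [h]
  · have h1 : (0:ℝ) < √|y| := Real.sqrt_pos.2 (abs_pos.2 h)
    have h2 : |y| = √|y| * √|y| := (Real.mul_self_sqrt (abs_nonneg y)).symm
    rw [← mul_assoc, h2]
    field_simp
    rw [Real.sqrt_sq h1.le]

lemma sqrt_pi_div_le (m y : ℝ) (hm : 0 < m) (hy : y ≠ 0) :
    √(π / ((1/64) + (1/128)*m^2/y^2)) ≤ √(128*π) * |y| / m := by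
  have hy2 : 0 < y^2 := by positivity
  have hb : (0:ℝ) < (1/128)*m^2/y^2 := by positivity
  have h1 : π / ((1/64) + (1/128)*m^2/y^2) ≤ π / ((1/128)*m^2/y^2) := by
    apply div_le_div_of_nonneg_left Real.pi_pos.le hb (by linarith)
  have h2 : π / ((1/128)*m^2/y^2) = 128*π*(|y|/m)^2 := by
    rw [div_pow, sq_abs]
    field_simp
  calc √(π / ((1/64) + (1/128)*m^2/y^2)) ≤ √(128*π*(|y|/m)^2) := by
        apply Real.sqrt_le_sqrt; rw [← h2]; exact h1
    _ = √(128*π) * |y| / m := by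
        rw [Real.sqrt_mul (by positivity), Real.sqrt_sq (by positivity)]
        ring

lemma TB1_integral_le (m : ℝ) (hm : 1 ≤ m) :
    ∫ p : ℝ×ℝ×ℝ, TB1 m p ≤ √(128*π) * ((∫ u, τf u) * (∫ u, σf u)) / m := by
  have hm0 : 0 < m := by linarith
  rw [vol_prod3, integral_prod_symm _ (vol_prod3 ▸ TB1_integrable m)]
  have hre : (fun q : ℝ×ℝ => ∫ x, TB1 m (x, q))
      = fun q => σf q.1 * σf q.2 * √(π / ((1/64) + (1/128)*m^2/q.1^2)) :=
    funext (TB1_inner m)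
  rw [hre]
  have hint : Integrable (fun q : ℝ×ℝ => (√(128*π)/m) * (τf q.1 * σf q.2)) :=
    (τf_integrable.mul_prod σf_integrable).const_mul _
  have hmono := integral_mono_of_nonneg
    (f := fun q : ℝ×ℝ => σf q.1 * σf q.2 * √(π / ((1/64) + (1/128)*m^2/q.1^2)))
    (g := fun q : ℝ×ℝ => (√(128*π)/m) * (τf q.1 * σf q.2))
    (Filter.Eventually.of_forall (fun q => by
      simp only [Pi.zero_apply]
      have h1 := σf_nonneg q.1
      have h2 := σf_nonneg q.2
      positivity))
    hint
    (by
      filter_upwards [ae_fst_ne_zero] with q hq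
      have h3 := sqrt_pi_div_le m q.1 hm0 hq
      calc σf q.1 * σf q.2 * √(π / ((1/64) + (1/128)*m^2/q.1^2))
          ≤ σf q.1 * σf q.2 * (√(128*π) * |q.1| / m) := by
            apply mul_le_mul_of_nonneg_left h3
            exact mul_nonneg (σf_nonneg q.1) (σf_nonneg q.2)
        _ = (√(128*π)/m) * ((|q.1| * σf q.1) * σf q.2) := by ring
        _ = (√(128*π)/m) * (τf q.1 * σf q.2) := by rw [abs_mul_σf])
  calc ∫ q : ℝ×ℝ, σf q.1 * σf q.2 * √(π / ((1/64) + (1/128)*m^2/q.1^2))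
      ≤ ∫ q : ℝ×ℝ, (√(128*π)/m) * (τf q.1 * σf q.2) := hmono
    _ = (√(128*π)/m) * ((∫ u, τf u) * (∫ u, σf u)) := by
        rw [MeasureTheory.integral_const_mul, vol_prod2, integral_prod_mul τf σf]
    _ = √(128*π) * ((∫ u, τf u) * (∫ u, σf u)) / m := by ring

noncomputable def TB2 (m : ℝ) (p : ℝ × ℝ × ℝ) : ℝ :=
  Pf p * rexp (-(1/128)*m^2*p.1^2/p.2.2^2)
noncomputable def TA (m : ℝ) (p : ℝ × ℝ × ℝ) : ℝ := Pf p * rexp (-(1/64)*m^2)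

lemma TB2_nonneg (m p) : 0 ≤ TB2 m p := by unfold TB2 Pf Λf σf; positivity
lemma TA_nonneg (m p) : 0 ≤ TA m p := by unfold TA Pf Λf σf; positivity
lemma TB2_le_Pf (m p) : TB2 m p ≤ Pf p := by
  have h1 : rexp (-(1/128)*m^2*p.1^2/p.2.2^2) ≤ 1 := by
    rw [Real.exp_le_one_iff]
    have : (0:ℝ) ≤ (1/128)*m^2*p.1^2/p.2.2^2 := by positivity
    have h0 : -(1/128)*m^2*p.1^2/p.2.2^2 = -((1/128)*m^2*p.1^2/p.2.2^2) := by ring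
    linarith
  have h2 : 0 ≤ Pf p := Pf_nonneg p
  unfold TB2
  nlinarith
lemma TA_le_Pf (m p) : TA m p ≤ Pf p := by
  have h1 : rexp (-(1/64)*m^2) ≤ 1 := by
    rw [Real.exp_le_one_iff]
    nlinarith [sq_nonneg m]
  have h2 : 0 ≤ Pf p := Pf_nonneg p
  unfold TA
  nlinarith
lemma TB2_measurable (m : ℝ) : Measurable (TB2 m) := by unfold TB2 Pf Λf σf; fun_prop
lemma TB2_integrable (m : ℝ) : Integrable (TB2 m) := by
  apply Pf_integrable.mono' (TB2_measurable m).aestronglyMeasurable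
  apply Filter.Eventually.of_forall
  intro p
  rw [Real.norm_eq_abs, abs_of_nonneg (TB2_nonneg m p)]
  exact TB2_le_Pf m p
lemma TA_integrable (m : ℝ) : Integrable (TA m) := Pf_integrable.mul_const _

lemma TA_integral (m : ℝ) :
    ∫ p : ℝ×ℝ×ℝ, TA m p = ((∫ u, Λf u) * ((∫ u, σf u) * (∫ u, σf u))) * rexp (-(1/64)*m^2) := by
  unfold TA
  rw [MeasureTheory.integral_mul_const, Pf_integral]

lemma le_Pf_integral {T : (ℝ×ℝ×ℝ) → ℝ} (hle : ∀ p, T p ≤ Pf p) :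
    ∫ p : ℝ×ℝ×ℝ, T p ≤ (∫ u, Λf u) * ((∫ u, σf u) * (∫ u, σf u)) := by
  rw [← Pf_integral]
  rcases em (Integrable T) with hT | hT
  · exact integral_mono hT Pf_integrable hle
  · rw [integral_undef hT]
    exact integral_nonneg Pf_nonneg

lemma ae_snd_ne_zero : ∀ᵐ q : ℝ × ℝ, q.2 ≠ (0:ℝ) := by
  rw [ae_iff]
  have h : {q : ℝ × ℝ | ¬ q.2 ≠ 0} = (Set.univ : Set ℝ) ×ˢ ({0} : Set ℝ) := by
    ext ⟨a, b⟩; simp [eq_comm]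
  rw [h, vol_prod2, Measure.prod_prod]
  simp

lemma TB2_inner (m : ℝ) (q : ℝ × ℝ) :
    ∫ x : ℝ, TB2 m (x, q) = σf q.1 * σf q.2 * √(π / ((1/64) + (1/128)*m^2/q.2^2)) := by
  have h1 : (fun x : ℝ => TB2 m (x, q))
      = fun x => (σf q.1 * σf q.2) * rexp (-((1/64) + (1/128)*m^2/q.2^2) * x^2) := by
    funext x
    show Λf x * (σf q.1 * σf q.2) * rexp (-(1/128)*m^2*x^2/q.2^2) = _
    unfold Λf
    rw [mul_comm (rexp (-(1/64) * x^2)) (σf q.1 * σf q.2), mul_assoc, ← Real.exp_add]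
    congr 2
    ring
  rw [h1, MeasureTheory.integral_const_mul, integral_gaussian]

lemma TB2_integral_le (m : ℝ) (hm : 1 ≤ m) :
    ∫ p : ℝ×ℝ×ℝ, TB2 m p ≤ √(128*π) * ((∫ u, σf u) * (∫ u, τf u)) / m := by
  have hm0 : 0 < m := by linarith
  rw [vol_prod3, integral_prod_symm _ (vol_prod3 ▸ TB2_integrable m)]
  have hre : (fun q : ℝ×ℝ => ∫ x, TB2 m (x, q))
      = fun q => σf q.1 * σf q.2 * √(π / ((1/64) + (1/128)*m^2/q.2^2)) :=
    funext (TB2_inner m)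
  rw [hre]
  have hint : Integrable (fun q : ℝ×ℝ => (√(128*π)/m) * (σf q.1 * τf q.2)) :=
    (σf_integrable.mul_prod τf_integrable).const_mul _
  have hmono := integral_mono_of_nonneg
    (f := fun q : ℝ×ℝ => σf q.1 * σf q.2 * √(π / ((1/64) + (1/128)*m^2/q.2^2)))
    (g := fun q : ℝ×ℝ => (√(128*π)/m) * (σf q.1 * τf q.2))
    (Filter.Eventually.of_forall (fun q => by
      simp only [Pi.zero_apply]
      have h1 := σf_nonneg q.1
      have h2 := σf_nonneg q.2
      positivity))
    hint
    (by
      filter_upwards [ae_snd_ne_zero] with q hq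
      have h3 := sqrt_pi_div_le m q.2 hm0 hq
      calc σf q.1 * σf q.2 * √(π / ((1/64) + (1/128)*m^2/q.2^2))
          ≤ σf q.1 * σf q.2 * (√(128*π) * |q.2| / m) := by
            apply mul_le_mul_of_nonneg_left h3
            exact mul_nonneg (σf_nonneg q.1) (σf_nonneg q.2)
        _ = (√(128*π)/m) * (σf q.1 * (|q.2| * σf q.2)) := by ring
        _ = (√(128*π)/m) * (σf q.1 * τf q.2) := by rw [abs_mul_σf])
  calc ∫ q : ℝ×ℝ, σf q.1 * σf q.2 * √(π / ((1/64) + (1/128)*m^2/q.2^2))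
      ≤ ∫ q : ℝ×ℝ, (√(128*π)/m) * (σf q.1 * τf q.2) := hmono
    _ = (√(128*π)/m) * ((∫ u, σf u) * (∫ u, τf u)) := by
        rw [MeasureTheory.integral_const_mul, vol_prod2, integral_prod_mul σf τf]
    _ = √(128*π) * ((∫ u, σf u) * (∫ u, τf u)) / m := by ring

noncomputable def pi3equiv : (Fin 3 → ℝ) ≃ᵐ ℝ × ℝ × ℝ :=
  (MeasurableEquiv.piFinSuccAbove (fun _ : Fin 3 => ℝ) 0).trans
    ((MeasurableEquiv.refl ℝ).prodCongr MeasurableEquiv.finTwoArrow)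

lemma pi3equiv_mp : MeasurePreserving pi3equiv volume volume :=
  ((MeasureTheory.volume_preserving_piFinSuccAbove (fun _ : Fin 3 => ℝ) 0).trans
    ((MeasurePreserving.id volume).prod (volume_preserving_finTwoArrow ℝ)))

lemma pi3equiv_apply (v : Fin 3 → ℝ) : pi3equiv v = (v 0, v 1, v 2) := by
  simp [pi3equiv, MeasurableEquiv.piFinSuccAbove, MeasurableEquiv.finTwoArrow,
    MeasurableEquiv.prodCongr, Fin.succAbove]
  constructor <;> rfl

lemma integral_pi3 (f : ℝ × ℝ × ℝ → ℝ) :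
    ∫ v : Fin 3 → ℝ, f (v 0, v 1, v 2) = ∫ p : ℝ × ℝ × ℝ, f p := by
  rw [← pi3equiv_mp.integral_comp pi3equiv.measurableEmbedding f]
  simp only [pi3equiv_apply]

lemma integrable_pi3 (f : ℝ × ℝ × ℝ → ℝ) (hf : Integrable f) :
    Integrable (fun v : Fin 3 → ℝ => f (v 0, v 1, v 2)) := by
  have h := (pi3equiv_mp.integrable_comp_emb pi3equiv.measurableEmbedding (g := f)).2 hf
  apply h.congr
  apply Filter.Eventually.of_forall
  intro v
  simp [Function.comp, pi3equiv_apply]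

noncomputable def gB (m : ℝ) (v : Fin 3 → ℝ) : ℝ :=
  (√((v 0)^2+(v 1)^2+(v 2)^2))⁻¹ *
    rexp (-(1/32) * (((v 0)^2+(v 1)^2+(v 2)^2) +
      (2*m*(v 0) + ((v 0)^2+(v 1)^2+(v 2)^2))^2 / ((v 0)^2+(v 1)^2+(v 2)^2)))

lemma gB_nonneg (m : ℝ) (v : Fin 3 → ℝ) : 0 ≤ gB m v := by unfold gB; positivity
lemma gB_measurable (m : ℝ) : Measurable (gB m) := by unfold gB; fun_prop

noncomputable def Tsum (m : ℝ) (p : ℝ × ℝ × ℝ) : ℝ := TA m p + TB1 m p + TB2 m p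

lemma Tsum_integrable (m : ℝ) : Integrable (Tsum m) :=
  ((TA_integrable m).add (TB1_integrable m)).add (TB2_integrable m)

lemma key_pointwise (m x y z : ℝ) (hy : y ≠ 0) (hz : z ≠ 0) :
    (√(x^2+y^2+z^2))⁻¹ *
      rexp (-(1/32) * ((x^2+y^2+z^2) + (2*m*x + (x^2+y^2+z^2))^2 / (x^2+y^2+z^2)))
    ≤ σf y * σf z * Λf x *
      (rexp (-(1/64)*m^2) + rexp (-(1/128)*m^2*x^2/y^2) + rexp (-(1/128)*m^2*x^2/z^2)) := by
  have hy2 : 0 < y^2 := by positivity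
  have hz2 : 0 < z^2 := by positivity
  set N : ℝ := x^2+y^2+z^2 with hNdef
  have hN : 0 < N := by positivity
  have inv_bound : (√N)⁻¹ ≤ (√|y|)⁻¹ * (√|z|)⁻¹ := by
    have h1 : √|y| * √|z| ≤ √N := by
      rw [← Real.sqrt_mul (abs_nonneg y)]
      apply Real.sqrt_le_sqrt
      have : |y| * |z| ≤ y^2 + z^2 := by
        nlinarith [sq_nonneg (|y| - |z|), sq_abs y, sq_abs z, abs_nonneg y, abs_nonneg z]
      nlinarith [sq_nonneg x]
    have h2 : 0 < √|y| * √|z| := by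
      apply mul_pos <;> exact Real.sqrt_pos.2 (abs_pos.2 (by assumption))
    rw [← mul_inv]
    exact inv_anti₀ h2 h1
  have exp_bound : -(1/32) * (N + (2*m*x + N)^2 / N)
      ≤ -(1/64)*N + (-(1/32)*(m^2*x^2/N)) := by
    have hQ : 0 ≤ (2*m*x + N)^2 / N := by positivity
    have hnum : (0:ℝ) ≤ (2*m*x+N)^2 - 2*m^2*x^2 + N^2 := by nlinarith [sq_nonneg (m*x+N)]
    have expand : (2*m*x+N)^2/N - (2*(m^2*x^2/N) - N) = ((2*m*x+N)^2 - 2*m^2*x^2 + N^2)/N := by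
      field_simp
      ring
    have hKey : 2*(m^2*x^2/N) - N ≤ (2*m*x+N)^2/N := by
      have := div_nonneg hnum hN.le
      linarith
    linarith
  have case_bound : rexp (-(1/32)*(m^2*x^2/N))
      ≤ rexp (-(1/64)*m^2) + rexp (-(1/128)*m^2*x^2/y^2) + rexp (-(1/128)*m^2*x^2/z^2) := by
    have e1 : ∀ w : ℝ, (0:ℝ) < rexp w := fun w => Real.exp_pos w
    rcases le_or_gt (y^2 + z^2) (x^2) with hc | hc
    · have hdiv : (1/2)*m^2 ≤ m^2*x^2/N := by
        rw [le_div_iff₀ hN]; nlinarith [sq_nonneg m]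
      have : rexp (-(1/32)*(m^2*x^2/N)) ≤ rexp (-(1/64)*m^2) := by
        apply Real.exp_le_exp.2; nlinarith
      linarith [e1 (-(1/128)*m^2*x^2/y^2), e1 (-(1/128)*m^2*x^2/z^2)]
    · rcases le_or_gt (z^2) (y^2) with hyz | hyz
      · have hdiv : m^2*x^2/(4*y^2) ≤ m^2*x^2/N := by
          rw [div_le_div_iff₀ (by positivity) hN]; nlinarith [sq_nonneg (m*x)]
        have : rexp (-(1/32)*(m^2*x^2/N)) ≤ rexp (-(1/128)*m^2*x^2/y^2) := by
          apply Real.exp_le_exp.2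
          have : -(1/32)*(m^2*x^2/(4*y^2)) = -(1/128)*m^2*x^2/y^2 := by ring
          linarith
        linarith [e1 (-(1/64)*m^2), e1 (-(1/128)*m^2*x^2/z^2)]
      · have hdiv : m^2*x^2/(4*z^2) ≤ m^2*x^2/N := by
          rw [div_le_div_iff₀ (by positivity) hN]; nlinarith [sq_nonneg (m*x)]
        have : rexp (-(1/32)*(m^2*x^2/N)) ≤ rexp (-(1/128)*m^2*x^2/z^2) := by
          apply Real.exp_le_exp.2
          have : -(1/32)*(m^2*x^2/(4*z^2)) = -(1/128)*m^2*x^2/z^2 := by ring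
          linarith
        linarith [e1 (-(1/64)*m^2), e1 (-(1/128)*m^2*x^2/y^2)]
  -- assembly
  have hsplit : rexp (-(1/32) * (N + (2*m*x + N)^2 / N))
      ≤ rexp (-(1/64)*N) * rexp (-(1/32)*(m^2*x^2/N)) := by
    rw [← Real.exp_add]
    exact Real.exp_le_exp.2 exp_bound
  calc (√N)⁻¹ * rexp (-(1/32) * (N + (2*m*x + N)^2 / N))
      ≤ ((√|y|)⁻¹ * (√|z|)⁻¹) * (rexp (-(1/64)*N) * rexp (-(1/32)*(m^2*x^2/N))) := by
        apply mul_le_mul inv_bound hsplit (le_of_lt (Real.exp_pos _)) (by positivity)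
    _ ≤ ((√|y|)⁻¹ * (√|z|)⁻¹) * (rexp (-(1/64)*N) *
          (rexp (-(1/64)*m^2) + rexp (-(1/128)*m^2*x^2/y^2) + rexp (-(1/128)*m^2*x^2/z^2))) := by
        apply mul_le_mul_of_nonneg_left _ (by positivity)
        exact mul_le_mul_of_nonneg_left case_bound (le_of_lt (Real.exp_pos _))
    _ = σf y * σf z * Λf x *
          (rexp (-(1/64)*m^2) + rexp (-(1/128)*m^2*x^2/y^2) + rexp (-(1/128)*m^2*x^2/z^2)) := by
        rw [show -(1/64)*N = -(1/64)*y^2 + (-(1/64)*z^2 + -(1/64)*x^2) by rw [hNdef]; ring,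
          Real.exp_add, Real.exp_add]
        unfold σf Λf
        ring

lemma key_pointwise' (m : ℝ) (v : Fin 3 → ℝ) (hy : v 1 ≠ 0) (hz : v 2 ≠ 0) :
    gB m v ≤ Tsum m (v 0, v 1, v 2) := by
  have h := key_pointwise m (v 0) (v 1) (v 2) hy hz
  unfold gB
  refine le_trans h (le_of_eq ?_)
  show _ = TA m (v 0, v 1, v 2) + TB1 m (v 0, v 1, v 2) + TB2 m (v 0, v 1, v 2)
  unfold TA TB1 TB2 Pf
  ring

lemma ae_pi_ne (i : Fin 3) : ∀ᵐ v : Fin 3 → ℝ, v i ≠ (0:ℝ) := by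
  rw [MeasureTheory.volume_pi]
  exact MeasureTheory.Measure.ae_eval_ne _ i 0

lemma lemB : ∃ K : ℝ, 0 < K ∧ ∀ m : ℝ, 0 ≤ m →
    Integrable (gB m) ∧ (∫ v : Fin 3 → ℝ, gB m v) ≤ K / (1+m) := by
  have hIΛ : 0 ≤ ∫ u, Λf u := integral_nonneg Λf_nonneg
  have hIσ : 0 ≤ ∫ u, σf u := integral_nonneg σf_nonneg
  have hIτ : 0 ≤ ∫ u, τf u := integral_nonneg τf_nonneg
  refine ⟨6*((∫ u, Λf u) * ((∫ u, σf u) * (∫ u, σf u)))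
    + 2*(64*((∫ u, Λf u) * ((∫ u, σf u) * (∫ u, σf u)))
        + √(128*π) * ((∫ u, τf u) * (∫ u, σf u)) + √(128*π) * ((∫ u, σf u) * (∫ u, τf u))) + 1,
    by positivity, fun m hm => ?_⟩
  have hae : ∀ᵐ v : Fin 3 → ℝ, gB m v ≤ Tsum m (v 0, v 1, v 2) := by
    filter_upwards [ae_pi_ne 1, ae_pi_ne 2] with v h1 h2
    exact key_pointwise' m v h1 h2
  have hTsum_int : Integrable (fun v : Fin 3 → ℝ => Tsum m (v 0, v 1, v 2)) :=
    integrable_pi3 _ (Tsum_integrable m)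
  have hgB_int : Integrable (gB m) := by
    apply hTsum_int.mono' (gB_measurable m).aestronglyMeasurable
    filter_upwards [hae] with v h
    rw [Real.norm_eq_abs, abs_of_nonneg (gB_nonneg m v)]
    exact h
  refine ⟨hgB_int, ?_⟩
  have hmono : ∫ v, gB m v ≤ ∫ p : ℝ×ℝ×ℝ, Tsum m p := by
    calc ∫ v, gB m v ≤ ∫ v : Fin 3 → ℝ, Tsum m (v 0, v 1, v 2) :=
          integral_mono_of_nonneg (Filter.Eventually.of_forall (gB_nonneg m)) hTsum_int hae
      _ = ∫ p : ℝ×ℝ×ℝ, Tsum m p := integral_pi3 _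
  have hsplit : ∫ p : ℝ×ℝ×ℝ, Tsum m p
      = (∫ p : ℝ×ℝ×ℝ, TA m p) + (∫ p : ℝ×ℝ×ℝ, TB1 m p) + (∫ p : ℝ×ℝ×ℝ, TB2 m p) := by
    unfold Tsum
    have h12 : Integrable (fun p : ℝ×ℝ×ℝ => TA m p + TB1 m p) :=
      (TA_integrable m).add (TB1_integrable m)
    rw [integral_add h12 (TB2_integrable m), integral_add (TA_integrable m) (TB1_integrable m)]
  have hgBnn : 0 ≤ ∫ v, gB m v := integral_nonneg (gB_nonneg m)
  have hApos : 0 < 1 + m := by linarith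
  rw [le_div_iff₀ hApos]
  rcases le_or_gt m 1 with hm1 | hm1
  · have hA := le_Pf_integral (TA_le_Pf m)
    have hB1 := le_Pf_integral (TB1_le_Pf m)
    have hB2 := le_Pf_integral (TB2_le_Pf m)
    nlinarith [Real.sqrt_nonneg (128*π), mul_nonneg (mul_nonneg hIτ hIσ) (Real.sqrt_nonneg (128*π)), mul_nonneg (mul_nonneg hIσ hIτ) (Real.sqrt_nonneg (128*π)), mul_nonneg (mul_nonneg hIΛ hIσ) hIσ]
  · -- m ≥ 1
    have hm0 : (0:ℝ) < m := by linarith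
    have hexp : rexp (-(1/64)*m^2) ≤ 64/m^2 := by
      have h1 : (1/64)*m^2 + 1 ≤ rexp ((1/64)*m^2) := by
        have := Real.add_one_le_exp ((1/64)*m^2)
        linarith
      have h2 : rexp (-(1/64)*m^2) = (rexp ((1/64)*m^2))⁻¹ := by
        rw [show -(1/64)*m^2 = -((1/64)*m^2) by ring, Real.exp_neg]
      rw [h2, show (64:ℝ)/m^2 = ((1/64)*m^2)⁻¹ by field_simp]
      exact inv_anti₀ (by positivity) (by linarith)
    have hA : ∫ p : ℝ×ℝ×ℝ, TA m p
        ≤ ((∫ u, Λf u) * ((∫ u, σf u) * (∫ u, σf u))) * (64/m^2) := by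
      rw [TA_integral]
      exact mul_le_mul_of_nonneg_left hexp (by positivity)
    have hB1 := TB1_integral_le m (by linarith)
    have hB2 := TB2_integral_le m (by linarith)
    -- abbreviations
    have hm2 : 64/m^2 ≤ 64/m := by
      apply div_le_div_of_nonneg_left (by norm_num) hm0
      nlinarith
    have hCA : (0:ℝ) ≤ (∫ u, Λf u) * ((∫ u, σf u) * (∫ u, σf u)) := by positivity
    have hCB : (0:ℝ) ≤ √(128*π) * ((∫ u, τf u) * (∫ u, σf u)) := by positivity
    have hCB' : (0:ℝ) ≤ √(128*π) * ((∫ u, σf u) * (∫ u, τf u)) := by positivity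
    set CA := (∫ u, Λf u) * ((∫ u, σf u) * (∫ u, σf u)) with hCAdef
    set CB := √(128*π) * ((∫ u, τf u) * (∫ u, σf u)) with hCBdef
    set CB' := √(128*π) * ((∫ u, σf u) * (∫ u, τf u)) with hCB'def
    rw [hsplit] at hmono
    have hR : ∫ v, gB m v ≤ (64*CA + CB + CB')/m := by
      have e1 : CA * (64/m^2) ≤ CA * (64/m) := mul_le_mul_of_nonneg_left hm2 hCA
      have e2 : CA * (64/m) + CB/m + CB'/m = (64*CA + CB + CB')/m := by ring
      linarith
    have hRm : (∫ v, gB m v) * m ≤ 64*CA + CB + CB' := (le_div_iff₀ hm0).1 hR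
    have hint1 : ∫ v, gB m v ≤ 64*CA + CB + CB' := by nlinarith
    have expand : (∫ v, gB m v)*(1+m) = (∫ v, gB m v) + (∫ v, gB m v)*m := by ring
    linarith

lemma log_one_add_le {δ t : ℝ} (hδ : 0 < δ) (ht : 0 ≤ t) :
    Real.log (1 + t) ≤ δ * t + (δ + Real.log δ⁻¹) := by
  have h1 : (0:ℝ) < 1 + t := by linarith
  have h2 : Real.log (1 + t) = Real.log (δ * (1 + t)) + Real.log δ⁻¹ := by
    rw [Real.log_mul (ne_of_gt hδ) (ne_of_gt h1), Real.log_inv]; ring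
  have h3 : Real.log (δ * (1 + t)) ≤ δ * (1 + t) - 1 :=
    Real.log_le_sub_one_of_pos (by positivity)
  nlinarith

lemma exists_pow_bound (p δ : ℝ) (hp : 0 < p) (hδ : 0 < δ) :
    ∃ A > 0, ∀ t : ℝ, 0 ≤ t → (1 + t) ^ p ≤ A * Real.exp (δ * t) := by
  refine ⟨Real.exp (p * (δ/p + Real.log (δ/p)⁻¹)), Real.exp_pos _, fun t ht => ?_⟩
  have h1 : (0:ℝ) < 1 + t := by linarith
  have h2 : (1 + t) ^ p = Real.exp (p * Real.log (1 + t)) := by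
    rw [← Real.exp_log h1, ← Real.exp_mul, Real.exp_log h1, mul_comm]
  rw [h2, ← Real.exp_add]
  apply Real.exp_le_exp.2
  have := log_one_add_le (div_pos hδ hp) ht
  have h4 := mul_le_mul_of_nonneg_left this (le_of_lt hp)
  have h5 : p * (δ / p * t) = δ * t := by field_simp
  nlinarith

lemma phaseA (γ : ℝ) (hγ : 0 < γ) : ∃ K₁ > 0, ∀ S : ℝ, 1 ≤ S → ∀ a b r : ℝ,
    0 ≤ a → 0 ≤ b → 0 ≤ r →
    ((S+a)^γ / (S+b)^γ) * (r + r⁻¹) * rexp (-(1/16)*r^2 - (1/16)*(a-b)^2/r^2)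
    ≤ K₁ * (r⁻¹ * rexp (-(1/32) * (r^2 + (a-b)^2/r^2))) := by
  obtain ⟨A, hA0, hA⟩ := exists_pow_bound γ (1/128) hγ (by norm_num)
  obtain ⟨A₂, hA₂0, hA₂⟩ := exists_pow_bound 1 (1/256) one_pos (by norm_num)
  refine ⟨A * A₂, by positivity, fun S hS a b r ha hb hr => ?_⟩
  rcases eq_or_lt_of_le hr with hr0 | hr0
  · simp [← hr0]
  have hS0 : (0:ℝ) < S := by linarith
  have hSb : (0:ℝ) < S + b := by linarith
  have hSa : (0:ℝ) ≤ S + a := by linarith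
  have hD : (0:ℝ) ≤ |a - b| := abs_nonneg _
  have hQ : (0:ℝ) ≤ (a-b)^2/r^2 := by positivity
  -- weight bound
  have hW : (S+a)^γ / (S+b)^γ ≤ (1+|a-b|)^γ := by
    rw [div_le_iff₀ (Real.rpow_pos_of_pos hSb γ), ← Real.mul_rpow (by linarith) hSb.le]
    apply Real.rpow_le_rpow hSa _ hγ.le
    have h1 : a - b ≤ |a-b| := le_abs_self _
    nlinarith
  have hWD : (1+|a-b|)^γ ≤ A * rexp ((1/128)*|a-b|) := hA _ hD
  have hW2 : (S+a)^γ / (S+b)^γ ≤ A * rexp ((1/128)*|a-b|) := le_trans hW hWD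
  -- middle factor
  have hmid : r + r⁻¹ = r⁻¹ * (1 + r^2) := by field_simp; ring
  have h256 : (1 + r^2) ≤ A₂ * rexp ((1/256)*r^2) := by
    have := hA₂ (r^2) (sq_nonneg r)
    rwa [Real.rpow_one] at this
  -- AM-GM
  have habs : |a-b| ≤ (r^2 + (a-b)^2/r^2)/2 := by
    rw [le_div_iff₀ (by norm_num : (0:ℝ) < 2)]
    have expand : (r^2 + (a-b)^2/r^2) - 2*(|a-b|) = (r^4 + (a-b)^2 - 2*(|a-b|)*r^2)/r^2 := by
      field_simp
    have h2 : 2*(|a-b|)*r^2 ≤ r^4 + (a-b)^2 := by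
      nlinarith [sq_nonneg (r^2 - |a-b|), sq_abs (a-b)]
    have h3 : (0:ℝ) ≤ (r^4 + (a-b)^2 - 2*(|a-b|)*r^2)/r^2 := by
      apply div_nonneg (by linarith) (sq_nonneg r)
    linarith [expand ▸ h3]
  -- exponent arithmetic
  have hexp : (1/128)*|a-b| + ((1/256)*r^2 + (-(1/16)*r^2 - (1/16)*(a-b)^2/r^2))
      ≤ -(1/32) * (r^2 + (a-b)^2/r^2) := by
    have e1 : (1:ℝ)/16*(a-b)^2/r^2 = 1/16*((a-b)^2/r^2) := by ring
    linarith [sq_nonneg r, e1]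
  -- assembly
  have hWnn : (0:ℝ) ≤ (S+a)^γ / (S+b)^γ :=
    div_nonneg (Real.rpow_nonneg hSa _) (Real.rpow_nonneg hSb.le _)
  calc ((S+a)^γ / (S+b)^γ) * (r + r⁻¹) * rexp (-(1/16)*r^2 - (1/16)*(a-b)^2/r^2)
      = (((S+a)^γ / (S+b)^γ) * (1 + r^2)) * (r⁻¹ * rexp (-(1/16)*r^2 - (1/16)*(a-b)^2/r^2)) := by
        rw [hmid]; ring
    _ ≤ ((A * rexp ((1/128)*|a-b|)) * (A₂ * rexp ((1/256)*r^2)))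
          * (r⁻¹ * rexp (-(1/16)*r^2 - (1/16)*(a-b)^2/r^2)) := by
        apply mul_le_mul_of_nonneg_right _ (by positivity)
        exact mul_le_mul hW2 h256 (by positivity) (by positivity)
    _ = (A * A₂) * (r⁻¹ * rexp ((1/128)*|a-b| + ((1/256)*r^2
          + (-(1/16)*r^2 - (1/16)*(a-b)^2/r^2)))) := by
        rw [Real.exp_add, Real.exp_add]
        ring
    _ ≤ (A * A₂) * (r⁻¹ * rexp (-(1/32) * (r^2 + (a-b)^2/r^2))) := by
        apply mul_le_mul_of_nonneg_left _ (by positivity)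
        apply mul_le_mul_of_nonneg_left _ (by positivity)
        exact Real.exp_le_exp.2 hexp

noncomputable def G0 (m : ℝ) (η : EuclideanSpace ℝ (Fin 3)) : ℝ :=
  ‖η‖⁻¹ * rexp (-(1/32) * (‖η‖^2 + (2*m*(η 0) + ‖η‖^2)^2 / ‖η‖^2))

lemma G0_comp_eq (m : ℝ) (v : Fin 3 → ℝ) :
    G0 m ((MeasurableEquiv.toLp 2 (Fin 3 → ℝ)) v) = gB m v := by
  have h0 : ∀ i, ((MeasurableEquiv.toLp 2 (Fin 3 → ℝ)) v) i = v i := fun i => rfl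
  have hn : ‖(MeasurableEquiv.toLp 2 (Fin 3 → ℝ)) v‖
      = √((v 0)^2+(v 1)^2+(v 2)^2) := by
    rw [EuclideanSpace.norm_eq]
    congr 1
    rw [Fin.sum_univ_three]
    simp only [h0, Real.norm_eq_abs, sq_abs]
  have hn2 : ‖(MeasurableEquiv.toLp 2 (Fin 3 → ℝ)) v‖^2
      = (v 0)^2+(v 1)^2+(v 2)^2 := by
    rw [hn, Real.sq_sqrt (by positivity)]
  unfold G0 gB
  rw [hn2, hn, h0 0]

lemma lemB_E : ∃ K : ℝ, 0 < K ∧ ∀ m : ℝ, 0 ≤ m →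
    Integrable (G0 m) ∧ (∫ η : EuclideanSpace ℝ (Fin 3), G0 m η) ≤ K / (1+m) := by
  obtain ⟨K, hK, h⟩ := lemB
  refine ⟨K, hK, fun m hm => ?_⟩
  obtain ⟨hint, hbound⟩ := h m hm
  have hmp := (EuclideanSpace.volume_preserving_symm_measurableEquiv_toLp (Fin 3)).symm
  have hemb := (MeasurableEquiv.toLp 2 (Fin 3 → ℝ)).measurableEmbedding
  have hcomp : (G0 m) ∘ (MeasurableEquiv.toLp 2 (Fin 3 → ℝ)) = gB m :=
    funext (G0_comp_eq m)
  constructor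
  · exact (hmp.integrable_comp_emb hemb).1 (by rw [MeasurableEquiv.symm_symm, hcomp]; exact hint)
  · rw [← hmp.integral_comp hemb (G0 m)]
    calc ∫ v, G0 m ((MeasurableEquiv.toLp 2 (Fin 3 → ℝ)) v) = ∫ v, gB m v := by
          simp only [G0_comp_eq]
      _ ≤ K/(1+m) := hbound

/-- Weighted kernel estimate (Lemma 7 of Guo): for the polynomial velocity weight
`w(ξ) = (Σ + |ξ|²)^γ` with `γ > 3/2`, there are `ε ∈ (0,1)` and `C > 0` depending
only on `γ` (uniform in `Σ ≥ 1`) such that the weighted Grad kernel integral is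
bounded by `C/(1 + ‖ξ‖)`. -/
theorem weighted_kernel_estimate (γ : ℝ) (hγ : 3/2 < γ) :
    ∃ ε ∈ Set.Ioo (0:ℝ) 1, ∃ C > (0:ℝ), ∀ S : ℝ, 1 ≤ S →
      ∀ ξ : EuclideanSpace ℝ (Fin 3),
        (∫ ξ' : EuclideanSpace ℝ (Fin 3),
          ((S + ‖ξ‖^2)^γ / (S + ‖ξ'‖^2)^γ) * (‖ξ - ξ'‖ + ‖ξ - ξ'‖⁻¹) *
            Real.exp (-((1-ε)/8) * ‖ξ - ξ'‖^2
              - ((1-ε)/8) * (‖ξ‖^2 - ‖ξ'‖^2)^2 / ‖ξ - ξ'‖^2))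
          ≤ C / (1 + ‖ξ‖) := by
  obtain ⟨K₁, hK₁, hpA⟩ := phaseA γ (by linarith)
  obtain ⟨K₂, hK₂, hB⟩ := lemB_E
  refine ⟨2⁻¹, ⟨by norm_num, by norm_num⟩, K₁*K₂ + 1, by positivity, fun S hS ξ => ?_⟩
  have hm : (0:ℝ) ≤ ‖ξ‖ := norm_nonneg ξ
  obtain ⟨hGint, hJ⟩ := hB ‖ξ‖ hm
  -- rotation
  have hnv₀ : ‖EuclideanSpace.single (0 : Fin 3) (‖ξ‖)‖ = ‖ξ‖ := by
    rw [EuclideanSpace.norm_single, Real.norm_eq_abs, abs_of_nonneg hm]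
  set f := Submodule.reflection (Submodule.span ℝ
    {EuclideanSpace.single (0 : Fin 3) (‖ξ‖) - ξ})ᗮ with hfdef
  have hfv₀ : f (EuclideanSpace.single (0 : Fin 3) (‖ξ‖)) = ξ := Submodule.reflection_sub hnv₀
  set Gfun : EuclideanSpace ℝ (Fin 3) → ℝ := fun ξ' => ‖ξ - ξ'‖⁻¹ *
    rexp (-(1/32) * (‖ξ - ξ'‖^2 + (‖ξ‖^2 - ‖ξ'‖^2)^2 / ‖ξ - ξ'‖^2)) with hGdef
  have hcompeq : ∀ η, Gfun (ξ + f η) = G0 ‖ξ‖ η := by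
    intro η
    have h1 : ξ - (ξ + f η) = -(f η) := by abel
    have h2 : ‖ξ - (ξ + f η)‖ = ‖η‖ := by rw [h1, norm_neg, f.norm_map]
    have h3 : (inner ℝ ξ (f η) : ℝ) = ‖ξ‖ * (η 0) := by
      rw [← hfv₀, LinearIsometryEquiv.inner_map_map]
      rw [EuclideanSpace.inner_single_left]
      simp
    have h4 : ‖ξ + f η‖^2 = ‖ξ‖^2 + 2*(‖ξ‖*(η 0)) + ‖η‖^2 := by
      rw [norm_add_sq_real, h3, f.norm_map]
    have h5 : ‖ξ‖^2 - ‖ξ + f η‖^2 = -(2*‖ξ‖*(η 0) + ‖η‖^2) := by rw [h4]; ring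
    show ‖ξ - (ξ + f η)‖⁻¹ * rexp (-(1/32) * (‖ξ - (ξ + f η)‖^2
      + (‖ξ‖^2 - ‖ξ + f η‖^2)^2 / ‖ξ - (ξ + f η)‖^2)) = G0 ‖ξ‖ η
    rw [h2, h5, neg_sq]
    unfold G0
    ring_nf
  -- integral transfer
  have step1 : ∫ ξ', Gfun ξ' = ∫ η, Gfun (ξ + η) := (integral_add_left_eq_self Gfun ξ).symm
  have hfmp : MeasurePreserving f := f.measurePreserving
  have hfemb : MeasurableEmbedding f := f.toHomeomorph.measurableEmbedding
  have step2 : ∫ η, Gfun (ξ + f η) = ∫ η, Gfun (ξ + η) :=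
    hfmp.integral_comp hfemb (fun w => Gfun (ξ + w))
  have step3 : ∫ η, Gfun (ξ + f η) = ∫ η, G0 ‖ξ‖ η := by simp only [hcompeq]
  have hGfun_val : ∫ ξ', Gfun ξ' = ∫ η, G0 ‖ξ‖ η := by rw [step1, ← step2, step3]
  -- integrability of Gfun
  have hint1 : Integrable (fun η => Gfun (ξ + f η)) := by
    have he : (fun η => Gfun (ξ + f η)) = G0 ‖ξ‖ := funext hcompeq
    rw [he]; exact hGint
  have hint2 : Integrable (fun w => Gfun (ξ + w)) := (hfmp.integrable_comp_emb hfemb).1 hint1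
  have hint3 : Integrable Gfun := by
    have hmp2 : MeasurePreserving (fun w : EuclideanSpace ℝ (Fin 3) => ξ + w)
        volume volume := measurePreserving_add_left volume ξ
    have hemb2 : MeasurableEmbedding (fun w : EuclideanSpace ℝ (Fin 3) => ξ + w) :=
      (Homeomorph.addLeft ξ).measurableEmbedding
    exact (hmp2.integrable_comp_emb hemb2).1 hint2
  -- pointwise bound and conclusion
  have hcoef : ((1:ℝ) - 2⁻¹)/8 = 1/16 := by norm_num
  have hb : ∀ ξ' : EuclideanSpace ℝ (Fin 3),
      ((S + ‖ξ‖^2)^γ / (S + ‖ξ'‖^2)^γ) * (‖ξ - ξ'‖ + ‖ξ - ξ'‖⁻¹) *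
        Real.exp (-((1-2⁻¹)/8) * ‖ξ - ξ'‖^2
          - ((1-2⁻¹)/8) * (‖ξ‖^2 - ‖ξ'‖^2)^2 / ‖ξ - ξ'‖^2)
      ≤ K₁ * Gfun ξ' := by
    intro ξ'
    rw [hcoef]
    exact hpA S hS (‖ξ‖^2) (‖ξ'‖^2) (‖ξ - ξ'‖) (by positivity) (by positivity) (norm_nonneg _)
  have hnn : ∀ ξ' : EuclideanSpace ℝ (Fin 3),
      (0:ℝ) ≤ ((S + ‖ξ‖^2)^γ / (S + ‖ξ'‖^2)^γ) * (‖ξ - ξ'‖ + ‖ξ - ξ'‖⁻¹) *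
        Real.exp (-((1-2⁻¹)/8) * ‖ξ - ξ'‖^2
          - ((1-2⁻¹)/8) * (‖ξ‖^2 - ‖ξ'‖^2)^2 / ‖ξ - ξ'‖^2) := by
    intro ξ'
    have h1 : (0:ℝ) ≤ S + ‖ξ‖^2 := by positivity
    have h2 : (0:ℝ) ≤ S + ‖ξ'‖^2 := by positivity
    have h3 : (0:ℝ) ≤ (S + ‖ξ‖^2)^γ / (S + ‖ξ'‖^2)^γ :=
      div_nonneg (Real.rpow_nonneg h1 _) (Real.rpow_nonneg h2 _)
    have h4 : (0:ℝ) ≤ ‖ξ - ξ'‖ + ‖ξ - ξ'‖⁻¹ := by positivity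
    positivity
  have h1pm : (0:ℝ) < 1 + ‖ξ‖ := by linarith
  calc (∫ ξ' : EuclideanSpace ℝ (Fin 3),
          ((S + ‖ξ‖^2)^γ / (S + ‖ξ'‖^2)^γ) * (‖ξ - ξ'‖ + ‖ξ - ξ'‖⁻¹) *
            Real.exp (-((1-2⁻¹)/8) * ‖ξ - ξ'‖^2
              - ((1-2⁻¹)/8) * (‖ξ‖^2 - ‖ξ'‖^2)^2 / ‖ξ - ξ'‖^2))
      ≤ ∫ ξ', K₁ * Gfun ξ' :=
        integral_mono_of_nonneg (Filter.Eventually.of_forall hnn)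
          (hint3.const_mul K₁) (Filter.Eventually.of_forall hb)
    _ = K₁ * ∫ ξ', Gfun ξ' := MeasureTheory.integral_const_mul K₁ Gfun
    _ = K₁ * ∫ η, G0 ‖ξ‖ η := by rw [hGfun_val]
    _ ≤ K₁ * (K₂/(1 + ‖ξ‖)) := mul_le_mul_of_nonneg_left hJ hK₁.le
    _ ≤ (K₁*K₂ + 1) / (1 + ‖ξ‖) := by
        rw [← mul_div_assoc]
        gcongr
        linarith
end

section
/- Define ψ_β(t) = t log t + (2 − t) log(2 − t) + β t (2 − t) for t ∈ (0, 2). If β > 1, then: (i) t = 1 is a strict local maximizer of ψ_β, i.e. there is ε > 0 with ψ_β(t) < ψ_β(1) for all t ∈ (1−ε, 1+ε), t ≠ 1; (ii) there exist 0 < ρ⁻ < 1 < ρ⁺ < 2 with ρ⁻ + ρ⁺ = 2 such that ψ_β(ρ⁺) = ψ_β(ρ⁻) ≤ ψ_β(t) for all t ∈ (0,2), ψ_β(ρ⁺) < ψ_β(1), and ψ_β′(ρ⁺) = 0 (equivalently log ρ⁺ + β ρ⁻ = log ρ⁻ + β ρ⁺). -/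
private lemma log_taylor_bound {x : ℝ} (h : |x| < 1) :
    Real.log (1 - x) ≤ -x - x^2/2 + |x|^3 / (1 - |x|) := by
  have h2 := Real.abs_log_sub_add_sum_range_le h 2
  rw [Finset.sum_range_succ, Finset.sum_range_one] at h2
  have h3 := (abs_le.1 h2).2
  push_cast at h3
  nlinarith [h3]

private lemma entropy_bound {s : ℝ} (hs : 0 < s) (hs2 : s ≤ 1/2) :
    (1+s) * Real.log (1+s) + (1-s) * Real.log (1-s) ≤ s^2 + 4*s^3 := by
  have habs : |s| < 1 := by rw [abs_of_pos hs]; linarith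
  have habs' : |(-s)| < 1 := by rwa [abs_neg]
  have h1 := log_taylor_bound habs
  have h2 := log_taylor_bound habs'
  rw [abs_of_pos hs] at h1
  rw [abs_neg, abs_of_pos hs, sub_neg_eq_add] at h2
  have hr : s^3/(1-s) ≤ 2*s^3 := by
    rw [div_le_iff₀ (by linarith)]
    nlinarith [mul_nonneg (mul_nonneg hs.le (mul_nonneg hs.le hs.le)) (show (0:ℝ) ≤ 1 - 2*s by linarith)]
  have hA : (1+s) * Real.log (1+s) ≤ (1+s) * (s - s^2/2 + 2*s^3) :=
    mul_le_mul_of_nonneg_left (by nlinarith) (by linarith)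
  have hB : (1-s) * Real.log (1-s) ≤ (1-s) * (-s - s^2/2 + 2*s^3) :=
    mul_le_mul_of_nonneg_left (by nlinarith) (by linarith)
  nlinarith [hA, hB]

/-- For `β > 1` the mixed phase `t = 1` is a strict local maximizer of
`ψ_β(t) = t log t + (2−t) log(2−t) + β t(2−t)` on `(0,2)`, and there are pure
phases `0 < ρ⁻ < 1 < ρ⁺ < 2`, `ρ⁻ + ρ⁺ = 2`, which are global minimizers with
equal chemical potentials. -/
theorem phase_transition_minimizers (β : ℝ) (hβ : 1 < β)
    (ψ : ℝ → ℝ)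
    (hψ : ∀ t, ψ t = t * Real.log t + (2 - t) * Real.log (2 - t) + β * t * (2 - t)) :
    (∃ ε > (0:ℝ), ∀ t ∈ Set.Ioo (1 - ε) (1 + ε), t ≠ 1 → ψ t < ψ 1) ∧
    ∃ ρm ρp : ℝ, 0 < ρm ∧ ρm < 1 ∧ 1 < ρp ∧ ρp < 2 ∧ ρm + ρp = 2 ∧
      ψ ρp = ψ ρm ∧ (∀ t ∈ Set.Ioo (0:ℝ) 2, ψ ρp ≤ ψ t) ∧ ψ ρp < ψ 1 ∧
      deriv ψ ρp = 0 ∧ Real.log ρp + β * ρm = Real.log ρm + β * ρp := by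
  have hψf : ψ = fun t => t * Real.log t + (2 - t) * Real.log (2 - t) + β * t * (2 - t) :=
    funext hψ
  have hsym : ∀ t, ψ (2 - t) = ψ t := by
    intro t
    rw [hψ, hψ]
    have e : 2 - (2 - t) = t := by ring
    rw [e]; ring
  have hψ1 : ψ 1 = β := by rw [hψ]; norm_num
  have hkey : ∀ s : ℝ, 0 < s → s ≤ 1/2 → 1 + 4*s < β → ψ (1 + s) < ψ 1 := by
    intro s hs hs2 hsβ
    have hb := entropy_bound hs hs2
    rw [hψ1, hψ]
    have e : 2 - (1 + s) = 1 - s := by ring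
    rw [e]
    nlinarith [mul_pos (mul_pos hs hs) (show (0:ℝ) < β - 1 - 4*s by linarith)]
  set ε := min (1/2 : ℝ) ((β - 1)/4) with hεdef
  have hε0 : 0 < ε := lt_min (by norm_num) (by linarith)
  have hεhalf : ε ≤ 1/2 := min_le_left _ _
  have hεβ : ε ≤ (β-1)/4 := min_le_right _ _
  have part1 : ∀ t ∈ Set.Ioo (1 - ε) (1 + ε), t ≠ 1 → ψ t < ψ 1 := by
    intro t ht hne
    obtain ⟨ht1, ht2⟩ := ht
    rcases lt_or_gt_of_ne hne with h | h
    · have e : ψ t = ψ (1 + (1 - t)) := by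
        rw [show (1:ℝ) + (1 - t) = 2 - t by ring, hsym]
      rw [e]
      exact hkey (1-t) (by linarith) (by linarith) (by linarith)
    · have e : ψ t = ψ (1 + (t - 1)) := by rw [show (1:ℝ) + (t - 1) = t by ring]
      rw [e]
      exact hkey (t-1) (by linarith) (by linarith) (by linarith)
  refine ⟨⟨ε, hε0, part1⟩, ?_⟩
  have hcont : Continuous ψ := by
    rw [hψf]
    exact (Real.continuous_mul_log.add
      (Real.continuous_mul_log.comp (continuous_const.sub continuous_id))).add (by continuity)
  obtain ⟨ρp, hρpmem, hmin'⟩ :=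
    isCompact_Icc.exists_isMinOn (Set.nonempty_Icc.2 (by norm_num : (1:ℝ) ≤ 2))
      hcont.continuousOn
  have hmin : ∀ y ∈ Set.Icc (1:ℝ) 2, ψ ρp ≤ ψ y := fun y hy => hmin' hy
  -- ψ ρp < ψ 1
  have hlt1 : ψ ρp < ψ 1 := by
    have hm : (1 + ε/2) ∈ Set.Icc (1:ℝ) 2 := ⟨by linarith, by linarith⟩
    refine lt_of_le_of_lt (hmin _ hm) (part1 (1+ε/2) ⟨by linarith, by linarith⟩ ?_)
    exact ne_of_gt (by linarith)
  -- ψ ρp < ψ 2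
  set u := Real.exp (-(2*β+1)) with hudef
  have hu0 : 0 < u := Real.exp_pos _
  have hu1 : u < 1 := by
    rw [hudef]
    calc Real.exp (-(2*β+1)) < Real.exp 0 := Real.exp_lt_exp.2 (by linarith)
    _ = 1 := Real.exp_zero
  have hlogu : Real.log u = -(2*β+1) := Real.log_exp _
  have hψ2 : ψ 2 = 2 * Real.log 2 := by rw [hψ]; norm_num
  have hbound : ψ (2 - u) < 2 * Real.log 2 := by
    rw [hψ]
    have e : 2 - (2 - u) = u := by ring
    rw [e]
    have l1 : Real.log (2 - u) ≤ Real.log 2 := by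
      apply Real.log_le_log (by linarith)
      linarith
    have l0 : 0 ≤ Real.log (2 - u) := Real.log_nonneg (by linarith)
    have h1 : (2 - u) * Real.log (2 - u) ≤ 2 * Real.log 2 := by nlinarith
    have h2 : β * (2 - u) * u ≤ 2 * β * u := by nlinarith [mul_nonneg (mul_nonneg (show (0:ℝ) ≤ β by linarith) hu0.le) hu0.le]
    have h3 : u * Real.log u = -(2*β+1) * u := by rw [hlogu]; ring
    nlinarith
  have hlt2 : ψ ρp < ψ 2 := by
    have hm : (2 - u) ∈ Set.Icc (1:ℝ) 2 := ⟨by linarith, by linarith⟩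
    calc ψ ρp ≤ ψ (2 - u) := hmin _ hm
    _ < 2 * Real.log 2 := hbound
    _ = ψ 2 := hψ2.symm
  have hρp1 : 1 < ρp := lt_of_le_of_ne hρpmem.1 (fun h => absurd hlt1 (by rw [← h]; exact lt_irrefl _))
  have hρp2 : ρp < 2 := lt_of_le_of_ne hρpmem.2 (fun h => absurd hlt2 (by rw [h]; exact lt_irrefl _))
  refine ⟨2 - ρp, ρp, by linarith, by linarith, hρp1, hρp2, by ring, (hsym ρp).symm, ?_, hlt1, ?_, ?_⟩
  · -- global minimizer on (0,2)
    intro t ht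
    rcases le_or_gt 1 t with h | h
    · exact hmin _ ⟨h, ht.2.le⟩
    · calc ψ ρp ≤ ψ (2 - t) := hmin _ ⟨by linarith [ht.1], by linarith [ht.1]⟩
      _ = ψ t := hsym t
  all_goals {
    -- derivative facts
    have hd : HasDerivAt ψ (Real.log ρp - Real.log (2 - ρp) + β*(2 - 2*ρp)) ρp := by
      have h1 : HasDerivAt (fun t : ℝ => t * Real.log t) (Real.log ρp + 1) ρp :=
        Real.hasDerivAt_mul_log (by linarith)
      have hi : HasDerivAt (fun t : ℝ => 2 - t) (-1) ρp := (hasDerivAt_id ρp).const_sub 2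
      have h2 : HasDerivAt (fun t : ℝ => (2 - t) * Real.log (2 - t))
          ((Real.log (2-ρp) + 1) * (-1)) ρp :=
        (Real.hasDerivAt_mul_log (by intro hc; linarith [hc] : (2:ℝ) - ρp ≠ 0)).comp ρp hi
      have h3 : HasDerivAt (fun t : ℝ => β * t * (2 - t)) (β * 1 * (2 - ρp) + (β * ρp) * (-1)) ρp :=
        HasDerivAt.mul ((hasDerivAt_id ρp).const_mul β) hi
      have htot := (h1.add h2).add h3
      rw [hψf]
      exact htot.congr_deriv (by ring)
    have hloc : IsLocalMin ψ ρp := by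
      apply Filter.eventually_of_mem
        (isOpen_Ioo.mem_nhds (show ρp ∈ Set.Ioo (0:ℝ) 2 from ⟨by linarith, hρp2⟩))
      intro t ht
      rcases le_or_gt 1 t with h | h
      · exact hmin _ ⟨h, ht.2.le⟩
      · calc ψ ρp ≤ ψ (2 - t) := hmin _ ⟨by linarith [ht.1], by linarith [ht.1]⟩
        _ = ψ t := hsym t
    have hz : deriv ψ ρp = 0 := hloc.deriv_eq_zero
    have hval : Real.log ρp - Real.log (2 - ρp) + β*(2 - 2*ρp) = 0 := by
      rw [← hd.deriv]; exact hz
    first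
    | exact hz
    | (ring_nf at hval ⊢; linarith)
  }
end

section
/- Let β > 0, k₀ ≠ 0, and Û₀ ∈ ℝ with β Û₀ > 1. Define μ_β(ξ) = (β/(2π))^{3/2} e^{−β|ξ|²/2} for ξ ∈ ℝ³ and write v = ξ₁. Then there exist λ > 0 and a square-integrable function q : ℝ³ → ℂ such that ∫_{ℝ³} q(ξ) √(μ_β(ξ)) dξ = 1 and, for all ξ ∈ ℝ³, (λ + i v k₀) q(ξ) = β k₀ i Û₀ v √(μ_β(ξ)). In particular q is an eigenfunction with positive eigenvalue λ of the collisionless linearized Vlasov operator at frequency k₀. -/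
open MeasureTheory Real Filter Topology

namespace VlasovGrowingAux

local notation "E3" => EuclideanSpace ℝ (Fin 3)

lemma cont_coord : Continuous (fun ξ : E3 => ξ 0) :=
  (continuous_apply 0).comp (EuclideanSpace.equiv (Fin 3) ℝ).continuous

lemma integrable_rexpE {b : ℝ} (hb : 0 < b) :
    Integrable (fun ξ : E3 => rexp (-b * ‖ξ‖^2)) := by
  have h := (GaussianFourier.integrable_cexp_neg_mul_sq_norm_add
    (V := E3) (b := (b:ℂ)) (by simpa using hb) 0 0).norm
  refine h.congr (Filter.Eventually.of_forall fun ξ => ?_)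
  simp [Complex.norm_exp]
  left
  norm_cast

noncomputable def G (β : ℝ) (ξ : E3) : ℝ := (β / (2 * π))^((3:ℝ)/2) * rexp (-(β/2) * ‖ξ‖^2)

lemma G_pos {β : ℝ} (hβ : 0 < β) (ξ : E3) : 0 < G β ξ := by
  unfold G
  have := Real.pi_pos
  positivity

lemma G_cont (β : ℝ) : Continuous (G β) := by
  unfold G
  exact continuous_const.mul (Real.continuous_exp.comp
    (continuous_const.mul (continuous_norm.pow 2)))

lemma G_int {β : ℝ} (hβ : 0 < β) : Integrable (G β) :=
  (integrable_rexpE (half_pos hβ)).const_mul _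

lemma G_integral {β : ℝ} (hβ : 0 < β) : ∫ ξ : E3, G β ξ = 1 := by
  unfold G
  rw [integral_const_mul, GaussianFourier.integral_rexp_neg_mul_sq_norm (half_pos hβ)]
  have h1 : (Module.finrank ℝ E3 / 2 : ℝ) = 3/2 := by
    simp [finrank_euclideanSpace_fin]
  rw [h1, ← Real.mul_rpow (by positivity) (by positivity)]
  have hπ := Real.pi_pos
  have : β / (2*π) * (π / (β/2)) = 1 := by
    field_simp
  rw [this, Real.one_rpow]

noncomputable def g (β k lam : ℝ) (ξ : E3) : ℝ :=
  G β ξ * (ξ 0 * k)^2 / (lam^2 + (ξ 0 * k)^2)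

lemma g_abs_le {β : ℝ} (hβ : 0 < β) (k lam : ℝ) (ξ : E3) : |g β k lam ξ| ≤ G β ξ := by
  unfold g
  rcases eq_or_lt_of_le (show (0:ℝ) ≤ lam^2 + (ξ 0 * k)^2 by positivity) with h | h
  · rw [← h, div_zero, abs_zero]
    exact (G_pos hβ ξ).le
  · have hG := (G_pos hβ ξ).le
    rw [abs_of_nonneg (by positivity)]
    rw [div_le_iff₀ h]
    nlinarith [G_pos hβ ξ, sq_nonneg (ξ 0 * k), sq_nonneg lam]

lemma g_cont {β : ℝ} (k : ℝ) {lam : ℝ} (hlam : 0 < lam) : Continuous (g β k lam) := by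
  unfold g
  exact ((G_cont β).mul ((cont_coord.mul continuous_const).pow 2)).div
    (continuous_const.add ((cont_coord.mul continuous_const).pow 2))
    (fun ξ => by positivity)

lemma g_int {β : ℝ} (hβ : 0 < β) (k : ℝ) {lam : ℝ} (hlam : 0 < lam) :
    Integrable (g β k lam) := by
  refine (G_int hβ).mono' (g_cont k hlam).aestronglyMeasurable ?_
  exact Filter.Eventually.of_forall fun ξ => by
    simpa [Real.norm_eq_abs] using g_abs_le hβ k lam ξ

noncomputable def F (β k lam : ℝ) : ℝ := ∫ ξ : E3, g β k lam ξ

lemma F_contAt {β : ℝ} (hβ : 0 < β) (k : ℝ) {lam₀ : ℝ} (hlam : 0 < lam₀) :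
    ContinuousAt (F β k) lam₀ := by
  refine continuousAt_of_dominated ?_ ?_ (G_int hβ) ?_
  · filter_upwards [eventually_gt_nhds hlam] with l hl
    exact (g_cont k hl).aestronglyMeasurable
  · exact Filter.Eventually.of_forall fun l =>
      Filter.Eventually.of_forall fun ξ => by
        simpa [Real.norm_eq_abs] using g_abs_le hβ k l ξ
  · refine Filter.Eventually.of_forall fun ξ => ?_
    unfold g
    exact ContinuousAt.div continuousAt_const
      (((continuous_pow 2).comp continuous_id).continuousAt.add continuousAt_const)
      (by positivity)

lemma F_tendsto_atTop {β : ℝ} (hβ : 0 < β) (k : ℝ) :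
    Tendsto (F β k) atTop (𝓝 0) := by
  have h := tendsto_integral_filter_of_dominated_convergence (μ := (volume : Measure E3))
    (F := fun lam ξ => g β k lam ξ) (f := fun _ => (0:ℝ)) (bound := G β) (l := atTop)
    ?_ ?_ (G_int hβ) ?_
  · exact (by simpa using h : Tendsto (fun n => ∫ a : E3, g β k n a) atTop (𝓝 0))
  · filter_upwards [eventually_gt_atTop 0] with l hl
    exact (g_cont k hl).aestronglyMeasurable
  · exact Filter.Eventually.of_forall fun l =>
      Filter.Eventually.of_forall fun ξ => by
        simpa [Real.norm_eq_abs] using g_abs_le hβ k l ξ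
  · refine Filter.Eventually.of_forall fun ξ => ?_
    unfold g
    exact Filter.Tendsto.div_atTop tendsto_const_nhds
      (tendsto_atTop_add_const_right atTop _ (tendsto_pow_atTop two_ne_zero))

lemma ae_coord_ne : ∀ᵐ ξ : E3, ξ 0 ≠ 0 := by
  set s : Submodule ℝ E3 :=
    { carrier := {ξ | ξ 0 = 0}
      add_mem' := fun ha hb => by simp_all [Set.mem_setOf_eq, PiLp.add_apply]
      zero_mem' := by simp [Set.mem_setOf_eq]
      smul_mem' := fun c ξ h => by simp_all [Set.mem_setOf_eq, PiLp.smul_apply] } with hs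
  have hne : s ≠ ⊤ := by
    intro h
    have : (EuclideanSpace.single (0 : Fin 3) (1:ℝ)) ∈ s := h ▸ Submodule.mem_top
    simp [hs, Set.mem_setOf_eq, EuclideanSpace.single_apply] at this
    exact absurd (show (EuclideanSpace.single (0 : Fin 3) (1:ℝ)) 0 = 0 from this) (by simp)
  have h0 : volume (s : Set E3) = 0 := Measure.addHaar_submodule volume s hne
  rw [ae_iff]
  convert h0 using 2
  simp [hs]
  rfl

lemma F_tendsto_zero {β k : ℝ} (hβ : 0 < β) (hk : k ≠ 0) :
    Tendsto (F β k) (𝓝[>] 0) (𝓝 1) := by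
  have h := tendsto_integral_filter_of_dominated_convergence (μ := (volume : Measure E3))
    (F := fun lam ξ => g β k lam ξ) (f := G β) (bound := G β) (l := 𝓝[>] (0:ℝ))
    ?_ ?_ (G_int hβ) ?_
  · rwa [G_integral hβ] at h
  · filter_upwards [self_mem_nhdsWithin] with l hl
    exact (g_cont k hl).aestronglyMeasurable
  · exact Filter.Eventually.of_forall fun l =>
      Filter.Eventually.of_forall fun ξ => by
        simpa [Real.norm_eq_abs] using g_abs_le hβ k l ξ
  · filter_upwards [ae_coord_ne] with ξ hξ
    have hN : 0 < (ξ 0 * k)^2 := by positivity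
    have hc : ContinuousAt (fun l : ℝ => g β k l ξ) 0 := by
      unfold g
      exact ContinuousAt.div continuousAt_const
        (((continuous_pow 2).comp continuous_id).continuousAt.add continuousAt_const)
        (by positivity)
    have hval : g β k 0 ξ = G β ξ := by
      unfold g
      field_simp
      ring
    have h2 : Tendsto (fun l : ℝ => g β k l ξ) (𝓝[>] 0) (𝓝 (g β k 0 ξ)) :=
      hc.tendsto.mono_left nhdsWithin_le_nhds
    rwa [hval] at h2

lemma mul_sqrt_eq (lam x k β U m : ℝ) (hlam : 0 < lam) (hm : 0 ≤ m) :
    ((β:ℂ) * k * Complex.I * U * x * Real.sqrt m / ((lam:ℂ) + Complex.I * x * k)) * Real.sqrt m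
      = ((β*U*(m*(x*k)^2/(lam^2+(x*k)^2)) : ℝ) : ℂ)
        + ((β*U*lam*k*(x*m)/(lam^2+(x*k)^2) : ℝ) : ℂ) * Complex.I := by
  have hD : ((lam:ℂ) + Complex.I * x * k) ≠ 0 := by
    intro h
    have := congrArg Complex.re h
    simp at this
    linarith
  have hden : (lam^2 + (x*k)^2 : ℝ) ≠ 0 := by positivity
  have hdenC : ((k:ℂ)^2*x^2+lam^2) ≠ 0 := by
    exact_mod_cast (show (k^2*x^2+lam^2:ℝ) ≠ 0 by positivity)
  have hsq : (Real.sqrt m : ℂ) * (Real.sqrt m : ℂ) = (m : ℂ) := by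
    norm_cast
    exact Real.mul_self_sqrt hm
  push_cast
  rw [div_mul_eq_mul_div, mul_assoc _ _ ((Real.sqrt m : ℂ)), hsq]
  field_simp
  ring_nf
  have hD' : (↑k * Complex.I * ↑x + ↑lam : ℂ) ≠ 0 := by
    rw [show (↑k * Complex.I * ↑x + ↑lam : ℂ) = ↑lam + Complex.I * ↑x * ↑k by ring]; exact hD
  field_simp [hdenC]
  linear_combination (-(β:ℂ)*k^2*U*x^2*m*lam) * Complex.I_sq

end VlasovGrowingAux

open VlasovGrowingAux

/-- Growing mode for the collisionless linearized Vlasov operator: if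
`β Û₀ > 1` and `k₀ ≠ 0`, there exist `λ > 0` and `q ∈ L²(ℝ³; ℂ)` normalized by
`∫ q √μ_β = 1` such that `(λ + i v k₀) q(ξ) = β k₀ i Û₀ v √μ_β(ξ)` for all `ξ`. -/
theorem collisionless_growing_mode (β k₀ Uhat : ℝ) (hβ : 0 < β) (hk : k₀ ≠ 0)
    (hU : 1 < β * Uhat)
    (μβ : EuclideanSpace ℝ (Fin 3) → ℝ)
    (hμβ : ∀ ξ, μβ ξ = (β / (2 * π))^((3:ℝ)/2) * Real.exp (-β * ‖ξ‖^2 / 2)) :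
    ∃ lam > (0:ℝ), ∃ q : EuclideanSpace ℝ (Fin 3) → ℂ,
      MemLp q 2 (volume : Measure (EuclideanSpace ℝ (Fin 3))) ∧
      (∫ ξ, q ξ * (Real.sqrt (μβ ξ) : ℂ)) = 1 ∧
      ∀ ξ, ((lam : ℂ) + Complex.I * (ξ 0 : ℝ) * (k₀ : ℝ)) * q ξ =
        (β : ℂ) * (k₀ : ℂ) * Complex.I * (Uhat : ℂ) * (ξ 0 : ℝ) *
          (Real.sqrt (μβ ξ) : ℂ) := by
  -- identify μβ with G β
  have hμG : μβ = G β := by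
    funext ξ
    rw [hμβ, G]
    congr 1
    ring_nf
  subst hμG
  -- the target value for the dispersion relation
  set y : ℝ := 1 / (β * Uhat) with hy
  have hβU : 0 < β * Uhat := lt_trans one_pos hU
  have hy0 : 0 < y := by positivity
  have hy1 : y < 1 := by
    rw [hy, div_lt_one hβU]
    exact hU
  -- find a with F > y
  obtain ⟨a, hFa, ha0⟩ : ∃ a, y < F β k₀ a ∧ 0 < a := by
    have h1 := (F_tendsto_zero hβ hk).eventually (eventually_gt_nhds hy1)
    exact (h1.and self_mem_nhdsWithin).exists
  -- find b with F < y and a < b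
  obtain ⟨b, hFb, hab⟩ : ∃ b, F β k₀ b < y ∧ a < b := by
    have h1 := (F_tendsto_atTop hβ k₀).eventually (eventually_lt_nhds hy0)
    exact (h1.and (eventually_gt_atTop a)).exists
  -- IVT
  have hcont : ContinuousOn (F β k₀) (Set.Icc a b) := fun x hx =>
    (F_contAt hβ k₀ (lt_of_lt_of_le ha0 hx.1)).continuousWithinAt
  obtain ⟨lam, hlamIcc, hFlam⟩ :=
    intermediate_value_Icc' hab.le hcont ⟨hFb.le, hFa.le⟩
  have hlam0 : 0 < lam := lt_of_lt_of_le ha0 hlamIcc.1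
  -- the denominator
  have hD : ∀ ξ : EuclideanSpace ℝ (Fin 3),
      ((lam:ℂ) + Complex.I * (ξ 0 : ℝ) * (k₀ : ℝ)) ≠ 0 := by
    intro ξ h
    have := congrArg Complex.re h
    simp at this
    linarith
  refine ⟨lam, hlam0, fun ξ =>
    ((β:ℂ) * (k₀:ℂ) * Complex.I * (Uhat:ℂ) * ((ξ 0 : ℝ):ℂ) * (Real.sqrt (G β ξ) : ℂ)) /
      ((lam:ℂ) + Complex.I * (ξ 0 : ℝ) * (k₀ : ℝ)), ?_, ?_, ?_⟩
  · -- Memℒp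
    have hsc : Continuous fun ξ : EuclideanSpace ℝ (Fin 3) => Real.sqrt (G β ξ) :=
      Real.continuous_sqrt.comp (G_cont β)
    have hnum : Continuous fun ξ : EuclideanSpace ℝ (Fin 3) =>
        (β:ℂ) * (k₀:ℂ) * Complex.I * (Uhat:ℂ) * ((ξ 0 : ℝ):ℂ) * (Real.sqrt (G β ξ) : ℂ) :=
      (continuous_const.mul (Complex.continuous_ofReal.comp cont_coord)).mul
        (Complex.continuous_ofReal.comp hsc)
    have hdenc : Continuous fun ξ : EuclideanSpace ℝ (Fin 3) =>
        (lam:ℂ) + Complex.I * ((ξ 0 : ℝ):ℂ) * (k₀:ℂ) :=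
      continuous_const.add ((continuous_const.mul
        (Complex.continuous_ofReal.comp cont_coord)).mul continuous_const)
    have hqc := hnum.div hdenc hD
    have hL2 : MemLp (fun ξ : EuclideanSpace ℝ (Fin 3) => Real.sqrt (G β ξ)) 2 volume := by
      rw [memLp_two_iff_integrable_sq hsc.aestronglyMeasurable]
      refine (G_int hβ).congr (Filter.Eventually.of_forall fun ξ => ?_)
      exact (Real.sq_sqrt (G_pos hβ ξ).le).symm
    have hbd : MemLp (fun ξ : EuclideanSpace ℝ (Fin 3) =>
        (β*|Uhat|) * Real.sqrt (G β ξ)) 2 volume := hL2.const_mul _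
    refine MemLp.of_le hbd hqc.aestronglyMeasurable (Filter.Eventually.of_forall fun ξ => ?_)
    have hAn : ‖(β:ℂ) * (k₀:ℂ) * Complex.I * (Uhat:ℂ) * ((ξ 0 : ℝ):ℂ) *
        (Real.sqrt (G β ξ) : ℂ)‖ = β * |k₀| * |Uhat| * |ξ 0| * Real.sqrt (G β ξ) := by
      simp [norm_mul, Complex.norm_real, Complex.norm_I, abs_of_pos hβ,
        abs_of_nonneg (Real.sqrt_nonneg _)]
    have hfinal : ‖((β:ℂ) * (k₀:ℂ) * Complex.I * (Uhat:ℂ) * ((ξ 0 : ℝ):ℂ) *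
        (Real.sqrt (G β ξ) : ℂ)) / ((lam:ℂ) + Complex.I * ((ξ 0 : ℝ):ℂ) * (k₀:ℂ))‖
        ≤ β * |Uhat| * Real.sqrt (G β ξ) := by
      rw [norm_div]
      rcases eq_or_ne (ξ 0) 0 with h0 | h0
      · rw [hAn, h0]
        simp only [abs_zero, mul_zero, zero_mul, zero_div]
        positivity
      · have hk2 : 0 < |ξ 0 * k₀| := abs_pos.mpr (mul_ne_zero h0 hk)
        have hDge : |ξ 0 * k₀| ≤ ‖(lam:ℂ) + Complex.I * ((ξ 0 : ℝ):ℂ) * (k₀:ℂ)‖ := by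
          have h := Complex.abs_im_le_norm ((lam:ℂ) + Complex.I * ((ξ 0 : ℝ):ℂ) * (k₀:ℂ))
          simpa using h
        have hstep : ‖(β:ℂ) * (k₀:ℂ) * Complex.I * (Uhat:ℂ) * ((ξ 0 : ℝ):ℂ) *
            (Real.sqrt (G β ξ) : ℂ)‖ / ‖(lam:ℂ) + Complex.I * ((ξ 0 : ℝ):ℂ) * (k₀:ℂ)‖
            ≤ ‖(β:ℂ) * (k₀:ℂ) * Complex.I * (Uhat:ℂ) * ((ξ 0 : ℝ):ℂ) *
            (Real.sqrt (G β ξ) : ℂ)‖ / |ξ 0 * k₀| := by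
          gcongr
        refine hstep.trans (le_of_eq ?_)
        rw [hAn, abs_mul]
        have h1 : |ξ 0| ≠ 0 := abs_ne_zero.mpr h0
        have h2 : |k₀| ≠ 0 := abs_ne_zero.mpr hk
        field_simp
    refine hfinal.trans ?_
    exact (le_abs_self _).trans_eq (Real.norm_eq_abs _).symm
  · -- normalization
    beta_reduce
    have hμnn : ∀ ξ : EuclideanSpace ℝ (Fin 3), 0 ≤ G β ξ := fun ξ => (G_pos hβ ξ).le
    set Bf : EuclideanSpace ℝ (Fin 3) → ℝ :=
      fun ξ => β*Uhat*lam*k₀*(ξ 0 * G β ξ)/(lam^2+(ξ 0*k₀)^2) with hBf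
    have key : ∀ ξ : EuclideanSpace ℝ (Fin 3),
        ((β:ℂ) * (k₀:ℂ) * Complex.I * (Uhat:ℂ) * ((ξ 0 : ℝ):ℂ) * (Real.sqrt (G β ξ) : ℂ)) /
          ((lam:ℂ) + Complex.I * (ξ 0 : ℝ) * (k₀ : ℝ)) * (Real.sqrt (G β ξ) : ℂ)
        = ((β*Uhat*(g β k₀ lam ξ) : ℝ):ℂ) + ((Bf ξ : ℝ):ℂ)*Complex.I :=
      fun ξ => mul_sqrt_eq lam (ξ 0) k₀ β Uhat (G β ξ) hlam0 (hμnn ξ)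
    have hAint : Integrable (fun ξ : EuclideanSpace ℝ (Fin 3) => β*Uhat*(g β k₀ lam ξ)) :=
      (g_int hβ k₀ hlam0).const_mul (β*Uhat)
    have hBcont : Continuous Bf := by
      rw [hBf]
      exact (continuous_const.mul (cont_coord.mul (G_cont β))).div
        (continuous_const.add ((cont_coord.mul continuous_const).pow 2))
        (fun ξ => by positivity)
    have hBbd : ∀ ξ, |Bf ξ| ≤ (β*|Uhat|) * G β ξ := by
      intro ξ
      have hden : (0:ℝ) < lam^2+(ξ 0*k₀)^2 := by positivity
      have h1 : |lam*(ξ 0*k₀)| ≤ lam^2 + (ξ 0*k₀)^2 := by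
        rw [abs_mul]
        nlinarith [sq_nonneg (|lam| - |ξ 0*k₀|), sq_abs lam, sq_abs (ξ 0*k₀),
          abs_nonneg lam, abs_nonneg (ξ 0*k₀)]
      rw [hBf]
      rw [abs_div, abs_of_pos hden, div_le_iff₀ hden]
      have habs : |β * Uhat * lam * k₀ * (ξ 0 * G β ξ)| = β * |Uhat| * |lam * (ξ 0 * k₀)| * G β ξ := by
        simp only [abs_mul, abs_of_pos hβ, abs_of_nonneg (hμnn ξ)]
        ring
      rw [habs]
      have h2 := mul_le_mul_of_nonneg_left h1
        (mul_nonneg (by positivity : (0:ℝ) ≤ β * |Uhat|) (hμnn ξ))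
      nlinarith [h2]
    have hBint : Integrable Bf :=
      ((G_int hβ).const_mul (β*|Uhat|)).mono' hBcont.aestronglyMeasurable
        (Filter.Eventually.of_forall fun ξ => by
          simpa [Real.norm_eq_abs] using hBbd ξ)
    have hBzero : (∫ ξ, Bf ξ) = 0 := by
      have hodd : ∀ ξ : EuclideanSpace ℝ (Fin 3), Bf (-ξ) = -(Bf ξ) := by
        intro ξ
        have h0 : (-ξ) 0 = -(ξ 0) := rfl
        have hG : G β (-ξ) = G β ξ := by unfold G; rw [norm_neg]
        rw [hBf]
        simp only [h0, hG]
        ring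
      have h2 := MeasureTheory.integral_neg_eq_self Bf
        (volume : Measure (EuclideanSpace ℝ (Fin 3)))
      have h3 : (∫ ξ, Bf (-ξ)) = - ∫ ξ, Bf ξ := by
        simp_rw [hodd]
        exact integral_neg Bf
      rw [h3] at h2
      linarith
    have hre : (∫ ξ : EuclideanSpace ℝ (Fin 3),
        ((β:ℂ) * (k₀:ℂ) * Complex.I * (Uhat:ℂ) * ((ξ 0 : ℝ):ℂ) * (Real.sqrt (G β ξ) : ℂ)) /
          ((lam:ℂ) + Complex.I * (ξ 0 : ℝ) * (k₀ : ℝ)) * (Real.sqrt (G β ξ) : ℂ))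
        = ∫ ξ : EuclideanSpace ℝ (Fin 3),
            (((β*Uhat*(g β k₀ lam ξ) : ℝ)):ℂ) + ((Bf ξ : ℝ):ℂ)*Complex.I :=
      integral_congr_ae (Filter.Eventually.of_forall key)
    have hAiC : Integrable (fun ξ : EuclideanSpace ℝ (Fin 3) =>
        (((β*Uhat*(g β k₀ lam ξ) : ℝ)):ℂ)) volume := hAint.ofReal
    have hBiC : Integrable (fun ξ : EuclideanSpace ℝ (Fin 3) =>
        ((Bf ξ : ℝ):ℂ) * Complex.I) volume := hBint.ofReal.mul_const _
    rw [hre, integral_add hAiC hBiC]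
    have hI1a : (∫ ξ : EuclideanSpace ℝ (Fin 3), (((β*Uhat*(g β k₀ lam ξ) : ℝ)):ℂ))
        = ((∫ ξ : EuclideanSpace ℝ (Fin 3), β*Uhat*(g β k₀ lam ξ) : ℝ) : ℂ) := integral_ofReal
    have hI1 : (∫ ξ : EuclideanSpace ℝ (Fin 3), (((β*Uhat*(g β k₀ lam ξ) : ℝ)):ℂ))
        = ((β*Uhat*y : ℝ) : ℂ) := by
      rw [hI1a]
      norm_cast
      rw [integral_const_mul]
      congr 1
    have hI2a : (∫ ξ : EuclideanSpace ℝ (Fin 3), ((Bf ξ : ℝ):ℂ))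
        = ((∫ ξ, Bf ξ : ℝ) : ℂ) := integral_ofReal
    have hI2 : (∫ ξ : EuclideanSpace ℝ (Fin 3), ((Bf ξ : ℝ):ℂ)*Complex.I)
        = ((0:ℝ):ℂ)*Complex.I := by
      simp_rw [← smul_eq_mul, integral_smul_const]
      rw [hI2a, hBzero, smul_eq_mul]
    rw [hI1, hI2]
    have : β*Uhat*y = 1 := by
      rw [hy]
      field_simp
      exact div_self (by rintro rfl; norm_num at hU)
    rw [this]
    simp
  · -- pointwise equation
    intro ξ
    field_simp
    rw [div_eq_iff (hD ξ)]; ring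
end

section
/- Let U : ℝ → ℝ be C¹ with U(r) = 0 for r ≥ 1, let β > 0, and let ρ₁, ρ₂ : ℝ → (0, ∞) be C¹, bounded, with bounded derivatives, satisfying ρ_i′(x) + β ρ_i(x) ∫_ℝ U(|x−y|) ρ_{i+1}′(y) dy = 0 for i = 1, 2 and all x ∈ ℝ (indices mod 2). Define μ_β(ξ) = (β/(2π))^{3/2} e^{−β|ξ|²/2} for ξ = (v, ζ) ∈ ℝ × ℝ², set f_i(x, ξ) = ρ_i(x) μ_β(ξ), F(h)(x) = −∂ₓ ∫_ℝ U(|x−y|) ∫_{ℝ³} h(y, ξ) dξ dy, and Q(h₁, h₂)(ξ) = ∫_{ℝ³×S²} |(ξ − ξ′)·ω| { h₁(ξ∗) h₂(ξ∗′) − h₁(ξ) h₂(ξ′) } dξ′ dω with ξ∗ = ξ − ω[ω·(ξ − ξ′)], ξ∗′ = ξ′ + ω[ω·(ξ − ξ′)]. Then for i = 1, 2 and all (x, ξ): v ∂ₓ f_i(x, ξ) + F(f_{i+1})(x) ∂_v f_i(x, ξ) = Q(f_i(x, ·), f₁(x, ·) + f₂(x, ·))(ξ); in particular (f₁, f₂)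 is a stationary solution of the Vlasov–Boltzmann system. -/
open MeasureTheory Real


lemma gauss_mass (β : ℝ) (hβ : 0 < β) :
    ∫ ξ : EuclideanSpace ℝ (Fin 3), (β / (2 * π))^((3:ℝ)/2) * Real.exp (-β * ‖ξ‖^2 / 2) = 1 := by
  have h : ∀ ξ : EuclideanSpace ℝ (Fin 3), -β * ‖ξ‖^2 / 2 = -(β/2) * ‖ξ‖^2 := fun ξ => by ring
  simp_rw [h]
  rw [MeasureTheory.integral_const_mul, GaussianFourier.integral_rexp_neg_mul_sq_norm (half_pos hβ)]
  have : (Module.finrank ℝ (EuclideanSpace ℝ (Fin 3)) / 2 : ℝ) = (3:ℝ)/2 := by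
    simp [finrank_euclideanSpace_fin]
  rw [this, ← Real.mul_rpow (by positivity) (by positivity)]
  have : β / (2 * π) * (π / (β/2)) = 1 := by
    field_simp
  rw [this, Real.one_rpow]

lemma norm_collision {E : Type*} [NormedAddCommGroup E] [InnerProductSpace ℝ E]
    (ξ ξ' ω : E) (hω : ‖ω‖ = 1) :
    ‖ξ - (inner ℝ (ξ - ξ') ω : ℝ) • ω‖^2 + ‖ξ' + (inner ℝ (ξ - ξ') ω : ℝ) • ω‖^2
      = ‖ξ‖^2 + ‖ξ'‖^2 := by
  set a : ℝ := inner ℝ (ξ - ξ') ω with ha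
  have h1 : ‖ξ - a • ω‖^2 = ‖ξ‖^2 - 2 * (a * inner ℝ ξ ω) + a^2 := by
    rw [norm_sub_sq_real, real_inner_smul_right, norm_smul]
    simp [hω, mul_pow, sq_abs]
  have h2 : ‖ξ' + a • ω‖^2 = ‖ξ'‖^2 + 2 * (a * inner ℝ ξ' ω) + a^2 := by
    rw [norm_add_sq_real, real_inner_smul_right, norm_smul]
    simp [hω, mul_pow, sq_abs]
  have ha' : a = (inner ℝ ξ ω : ℝ) - inner ℝ ξ' ω := by rw [ha, inner_sub_left]
  rw [h1, h2]
  linear_combination (2*a) * ha'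

lemma conv_hasDerivAt (U ρ : ℝ → ℝ) (hU : ContDiff ℝ 1 U) (hUsupp : ∀ r, 1 ≤ r → U r = 0)
    (hρ : ContDiff ℝ 1 ρ) (B' : ℝ) (hB' : ∀ x, |deriv ρ x| ≤ B') (x : ℝ) :
    HasDerivAt (fun x' : ℝ => ∫ y : ℝ, U |x' - y| * ρ y)
      (∫ y : ℝ, U |x - y| * deriv ρ y) x := by
  have hUc : Continuous fun z : ℝ => U |z| := hU.continuous.comp continuous_abs
  have hUcs : HasCompactSupport fun z : ℝ => U |z| := by
    apply HasCompactSupport.intro (isCompact_Icc (a := (-1:ℝ)) (b := 1))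
    intro z hz
    apply hUsupp
    rcases not_and_or.mp (fun h : -1 ≤ z ∧ z ≤ 1 => hz ⟨h.1, h.2⟩) with h | h
    · rw [abs_of_neg (by linarith [not_le.mp h])]; linarith [not_le.mp h]
    · rw [abs_of_pos (by linarith [not_le.mp h])]; linarith [not_le.mp h]
  have hUint : Integrable fun z : ℝ => U |z| := hUc.integrable_of_hasCompactSupport hUcs
  have hρc : Continuous ρ := hρ.continuous
  have hρ'c : Continuous (deriv ρ) := hρ.continuous_deriv le_rfl
  have key : ∀ (g : ℝ → ℝ) (x' : ℝ), (∫ y : ℝ, U |x' - y| * g y) = ∫ z : ℝ, U |z| * g (x' - z) := by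
    intro g x'
    rw [← integral_sub_left_eq_self (fun z => U |z| * g (x' - z)) volume x']
    congr 1; funext y; simp
  have hsub : ∀ x' : ℝ, Continuous fun z : ℝ => x' - z := fun x' =>
    continuous_const.sub continuous_id
  simp only [key]
  have main := (hasDerivAt_integral_of_dominated_loc_of_deriv_le (𝕜 := ℝ) (α := ℝ) (E := ℝ) (μ := volume)
      (F := fun x' z => U |z| * ρ (x' - z)) (F' := fun x' z => U |z| * deriv ρ (x' - z))
      (x₀ := x) (bound := fun z => abs (U (abs z)) * B') (Metric.ball_mem_nhds x one_pos)
      (Filter.Eventually.of_forall fun x' =>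
        (hUc.mul (hρc.comp (hsub x'))).aestronglyMeasurable)
      ((hUc.mul (hρc.comp (hsub x))).integrable_of_hasCompactSupport
        (hUcs.mul_right))
      (hUc.mul (hρ'c.comp (hsub x))).aestronglyMeasurable
      (Filter.Eventually.of_forall fun z x' _ => by
        rw [norm_mul]
        exact mul_le_mul_of_nonneg_left (by simpa using hB' (x' - z)) (norm_nonneg _))
      ((hUint.abs).mul_const B')
      (Filter.Eventually.of_forall fun z x' _ => by
        have h1 : HasDerivAt (fun t : ℝ => t - z) 1 x' := (hasDerivAt_id x').sub_const z
        have h2 : HasDerivAt ρ (deriv ρ (x' - z)) (x' - z) :=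
          (hρ.differentiable one_ne_zero (x' - z)).hasDerivAt
        simpa using (h2.comp x' h1).const_mul (U |z|))).2
  exact main

/-- The Maxwellian front is a stationary solution of the two-species
Vlasov–Boltzmann system: if the densities satisfy the differentiated
Euler–Lagrange equations, then `f_i(x,ξ) = ρ_i(x) μ_β(ξ)` satisfies
`v ∂ₓ f_i + F(f_{i+1}) ∂_v f_i = Q(f_i, f₁ + f₂)`. -/
theorem maxwellian_front_stationary
    (U : ℝ → ℝ) (hU : ContDiff ℝ 1 U) (hUsupp : ∀ r, 1 ≤ r → U r = 0)
    (β : ℝ) (hβ : 0 < β)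
    (ρ₁ ρ₂ : ℝ → ℝ) (hρ₁ : ContDiff ℝ 1 ρ₁) (hρ₂ : ContDiff ℝ 1 ρ₂)
    (hρ₁pos : ∀ x, 0 < ρ₁ x) (hρ₂pos : ∀ x, 0 < ρ₂ x)
    (hbd₁ : ∃ B, ∀ x, ρ₁ x ≤ B) (hbd₂ : ∃ B, ∀ x, ρ₂ x ≤ B)
    (hbd₁' : ∃ B, ∀ x, |deriv ρ₁ x| ≤ B) (hbd₂' : ∃ B, ∀ x, |deriv ρ₂ x| ≤ B)
    (hEL₁ : ∀ x, deriv ρ₁ x + β * ρ₁ x * ∫ y : ℝ, U |x - y| * deriv ρ₂ y = 0)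
    (hEL₂ : ∀ x, deriv ρ₂ x + β * ρ₂ x * ∫ y : ℝ, U |x - y| * deriv ρ₁ y = 0)
    (μβ : EuclideanSpace ℝ (Fin 3) → ℝ)
    (hμβ : ∀ ξ, μβ ξ = (β / (2 * π))^((3:ℝ)/2) * Real.exp (-β * ‖ξ‖^2 / 2))
    (f₁ f₂ : ℝ → EuclideanSpace ℝ (Fin 3) → ℝ)
    (hf₁ : ∀ x ξ, f₁ x ξ = ρ₁ x * μβ ξ) (hf₂ : ∀ x ξ, f₂ x ξ = ρ₂ x * μβ ξ)
    (F : (ℝ → EuclideanSpace ℝ (Fin 3) → ℝ) → ℝ → ℝ)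
    (hF : ∀ h x, F h x =
      - deriv (fun x' : ℝ => ∫ y : ℝ, U |x' - y| * ∫ ξ : EuclideanSpace ℝ (Fin 3), h y ξ) x)
    (Q : (EuclideanSpace ℝ (Fin 3) → ℝ) → (EuclideanSpace ℝ (Fin 3) → ℝ) →
      EuclideanSpace ℝ (Fin 3) → ℝ)
    (hQ : ∀ h₁ h₂ ξ, Q h₁ h₂ ξ =
      ∫ ξ' : EuclideanSpace ℝ (Fin 3),
        ∫ ω in Metric.sphere (0 : EuclideanSpace ℝ (Fin 3)) 1,
          |(inner ℝ (ξ - ξ') ω : ℝ)| *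
            (h₁ (ξ - (inner ℝ (ξ - ξ') ω : ℝ) • ω) * h₂ (ξ' + (inner ℝ (ξ - ξ') ω : ℝ) • ω)
              - h₁ ξ * h₂ ξ') ∂(μH[2])) :
    (∀ x ξ, (ξ 0) * deriv (fun x' => f₁ x' ξ) x +
        F f₂ x * deriv (fun s : ℝ => f₁ x (ξ + s • EuclideanSpace.single 0 1)) 0 =
      Q (f₁ x) (fun η => f₁ x η + f₂ x η) ξ) ∧
    (∀ x ξ, (ξ 0) * deriv (fun x' => f₂ x' ξ) x +
        F f₁ x * deriv (fun s : ℝ => f₂ x (ξ + s • EuclideanSpace.single 0 1)) 0 =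
      Q (f₂ x) (fun η => f₁ x η + f₂ x η) ξ) := by
  obtain ⟨B₁', hB₁'⟩ := hbd₁'
  obtain ⟨B₂', hB₂'⟩ := hbd₂'
  -- total mass of the Maxwellian is 1
  have hmass : (∫ ξ : EuclideanSpace ℝ (Fin 3), μβ ξ) = 1 := by
    rw [show μβ = fun ξ => (β / (2 * π))^((3:ℝ)/2) * Real.exp (-β * ‖ξ‖^2 / 2) from
      funext hμβ]
    exact gauss_mass β hβ
  -- the collision operator vanishes on Maxwellians
  have hQzero : ∀ (r s : ℝ) (g₁ g₂ : EuclideanSpace ℝ (Fin 3) → ℝ),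
      (∀ η, g₁ η = r * μβ η) → (∀ η, g₂ η = s * μβ η) → ∀ ξ, Q g₁ g₂ ξ = 0 := by
    intro r s g₁ g₂ hg₁ hg₂ ξ
    rw [hQ]
    have hin : ∀ ξ' : EuclideanSpace ℝ (Fin 3),
        (∫ ω in Metric.sphere (0 : EuclideanSpace ℝ (Fin 3)) 1,
          |(inner ℝ (ξ - ξ') ω : ℝ)| *
            (g₁ (ξ - (inner ℝ (ξ - ξ') ω : ℝ) • ω) * g₂ (ξ' + (inner ℝ (ξ - ξ') ω : ℝ) • ω)
              - g₁ ξ * g₂ ξ') ∂(μH[2])) = 0 := by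
      intro ξ'
      apply setIntegral_eq_zero_of_forall_eq_zero
      intro ω hω
      have hω1 : ‖ω‖ = 1 := by simpa using hω
      have hn := norm_collision ξ ξ' ω hω1
      have hμ : μβ (ξ - (inner ℝ (ξ - ξ') ω : ℝ) • ω) * μβ (ξ' + (inner ℝ (ξ - ξ') ω : ℝ) • ω)
          = μβ ξ * μβ ξ' := by
        simp only [hμβ]
        rw [mul_mul_mul_comm, ← Real.exp_add, mul_mul_mul_comm, ← Real.exp_add]
        congr 2
        linear_combination (-β/2) * hn
      rw [hg₁, hg₁, hg₂, hg₂]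
      linear_combination (|(inner ℝ (ξ - ξ') ω : ℝ)| * (r * s)) * hμ
    simp only [hin, integral_zero]
  -- velocity derivative of the Maxwellian profile
  have hvderiv : ∀ (c : ℝ) (ξ : EuclideanSpace ℝ (Fin 3)),
      deriv (fun s : ℝ => c * μβ (ξ + s • EuclideanSpace.single 0 (1:ℝ))) 0
        = -(β * ξ 0) * (c * μβ ξ) := by
    intro c ξ
    have hns : ∀ s : ℝ, ‖ξ + s • EuclideanSpace.single 0 (1:ℝ)‖^2
        = ‖ξ‖^2 + 2*(s * ξ 0) + s^2 := by
      intro s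
      rw [norm_add_sq_real, real_inner_smul_right, norm_smul]
      simp [EuclideanSpace.inner_single_right, mul_pow]
    have hrw : (fun s : ℝ => c * μβ (ξ + s • EuclideanSpace.single 0 (1:ℝ)))
        = fun s : ℝ => c * ((β / (2 * π))^((3:ℝ)/2) *
            Real.exp (-β * (‖ξ‖^2 + 2*(s * ξ 0) + s^2) / 2)) := by
      funext s; rw [hμβ, hns]
    rw [hrw]
    have h1 : HasDerivAt (fun s : ℝ => ‖ξ‖^2 + 2*(s * ξ 0) + s^2) (2 * ξ 0) 0 := by
      have h := ((((hasDerivAt_id (0:ℝ)).mul_const (ξ 0)).const_mul 2).const_add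
        (‖ξ‖^2)).add (hasDerivAt_pow 2 (0:ℝ))
      simp at h
      exact h
    have h2 : HasDerivAt (fun s : ℝ => -β * (‖ξ‖^2 + 2*(s * ξ 0) + s^2) / 2)
        (-(β * ξ 0)) 0 := by
      have h := (h1.const_mul (-β)).div_const 2
      convert h using 1
      exacts [rfl, rfl, by ring]
    have h3 := ((h2.exp).const_mul ((β / (2 * π))^((3:ℝ)/2))).const_mul c
    rw [h3.deriv, hμβ]
    norm_num
    ring
  -- the force field
  have hmassf : ∀ (ρ : ℝ → ℝ) (f : ℝ → EuclideanSpace ℝ (Fin 3) → ℝ)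
      (hf : ∀ x ξ, f x ξ = ρ x * μβ ξ) (y : ℝ),
      (∫ ξ : EuclideanSpace ℝ (Fin 3), f y ξ) = ρ y := by
    intro ρ f hf y
    rw [show (fun ξ : EuclideanSpace ℝ (Fin 3) => f y ξ) = fun ξ => ρ y * μβ ξ from
      funext (hf y), MeasureTheory.integral_const_mul, hmass, mul_one]
  have hF₂ : ∀ x, F f₂ x = -∫ y : ℝ, U |x - y| * deriv ρ₂ y := by
    intro x
    rw [hF]
    simp only [hmassf ρ₂ f₂ hf₂]
    rw [(conv_hasDerivAt U ρ₂ hU hUsupp hρ₂ B₂' hB₂' x).deriv]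
  have hF₁ : ∀ x, F f₁ x = -∫ y : ℝ, U |x - y| * deriv ρ₁ y := by
    intro x
    rw [hF]
    simp only [hmassf ρ₁ f₁ hf₁]
    rw [(conv_hasDerivAt U ρ₁ hU hUsupp hρ₁ B₁' hB₁' x).deriv]
  constructor
  · intro x ξ
    rw [hQzero (ρ₁ x) (ρ₁ x + ρ₂ x) (f₁ x) _ (hf₁ x)
      (fun η => by rw [hf₁, hf₂]; ring) ξ]
    rw [show (fun x' => f₁ x' ξ) = fun x' => ρ₁ x' * μβ ξ from funext fun x' => hf₁ x' ξ,
      deriv_mul_const ((hρ₁.differentiable one_ne_zero).differentiableAt)]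
    rw [show (fun s : ℝ => f₁ x (ξ + s • EuclideanSpace.single 0 1))
        = fun s : ℝ => ρ₁ x * μβ (ξ + s • EuclideanSpace.single 0 (1:ℝ)) from
      funext fun s => hf₁ x _]
    rw [hvderiv (ρ₁ x) ξ, hF₂ x]
    linear_combination (ξ 0 * μβ ξ) * hEL₁ x
  · intro x ξ
    rw [hQzero (ρ₂ x) (ρ₁ x + ρ₂ x) (f₂ x) _ (hf₂ x)
      (fun η => by rw [hf₁, hf₂]; ring) ξ]
    rw [show (fun x' => f₂ x' ξ) = fun x' => ρ₂ x' * μβ ξ from funext fun x' => hf₂ x' ξ,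
      deriv_mul_const ((hρ₂.differentiable one_ne_zero).differentiableAt)]
    rw [show (fun s : ℝ => f₂ x (ξ + s • EuclideanSpace.single 0 1))
        = fun s : ℝ => ρ₂ x * μβ (ξ + s • EuclideanSpace.single 0 (1:ℝ)) from
      funext fun s => hf₂ x _]
    rw [hvderiv (ρ₂ x) ξ, hF₁ x]
    linear_combination (ξ 0 * μβ ξ) * hEL₂ x
end
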